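/- arXiv:1407.5520 — 6 statements merged into one kernel-verified Lean document; each statement's English description precedes it below -/
import Mathlib

section
/- Let X be a real Hilbert space, let a < b be real numbers with k = b − a, and let r ∈ ℕ. Let U be an X-valued polynomial of degree at most r, and let L be an X-valued polynomial of degree at most r satisfying ∫_a^b ⟨L(t), V(t)⟩ dt = ⟨U(a), V(a)⟩ for every X-valued polynomial V of degree at most r. Then for every p ∈ [1, ∞], sup_{t ∈ [a,b]} ‖U(t)‖ ≤ 2 · k^{1 − 1/p} · (∫_a^b ‖U'(t) + L(t)‖^p dt)^{1/p}, where for p = ∞ the right-hand side is 2 · k · sup_{t ∈ [a,b]} ‖U'(t) + L(t)‖. -/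
open MeasureTheory Set
open scoped RealInnerProductSpace ENNReal NNReal

/-- `U : ℝ → X` is an `X`-valued polynomial of degree at most `r`. -/
def IsXPoly {X : Type*} [NormedAddCommGroup X] [NormedSpace ℝ X]
    (r : ℕ) (U : ℝ → X) : Prop :=
  ∃ c : ℕ → X, ∀ t : ℝ, U t = ∑ i ∈ Finset.range (r + 1), t ^ i • c i

/-!
Let `P_n` be the Legendre polynomial of degree `n` on `[a, b]` normalized by `P_n(a) = 1`, so that
`P_n(b) = (-1)ⁿ`, `|P_n| ≤ 1` on `[a, b]` and `P_n` is orthogonal to all polynomials of degree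
`< n`. Then `W = (P_r + P_{r+1}) / 2` has `W(a) = 1`, `W(b) = 0`, `|W| ≤ 1`, and integration by
parts shows that `-W'` represents `φ ↦ φ(a)` on polynomials of degree `≤ r`; by uniqueness the
lifting is `L = -W' • U(a)`. Hence `U(t) = W(t) • U(a) + ∫_a^t (U' + L)`. Testing `U' + L` against
`P_r • U(a)`, which is orthogonal to `U'`, gives `‖U(a)‖ ≤ ‖U' + L‖_{L¹}`, so
`‖U(t)‖ ≤ 2 ‖U' + L‖_{L¹}`, and Hölder's inequality turns the `L¹` norm into the `Lᵖ` norm.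
-/

open Polynomial

lemma le_max_of_hasDerivAt_of_sign_change {h h' : ℝ → ℝ} {a b c x : ℝ}
    (hh : ∀ y, HasDerivAt h (h' y) y) (hneg : ∀ y ≤ c, h' y ≤ 0)
    (hpos : ∀ y, c ≤ y → 0 ≤ h' y) (hx : x ∈ Icc a b) : h x ≤ max (h a) (h b) := by
  have hcont : Continuous h := continuous_iff_continuousAt.2 fun y => (hh y).continuousAt
  rcases le_total x c with hxc | hcx
  · have hanti : AntitoneOn h (Icc a c) :=
      antitoneOn_of_hasDerivWithinAt_nonpos (convex_Icc a c) hcont.continuousOn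
        (fun y _ => (hh y).hasDerivWithinAt)
        (fun y hy => hneg y (by rw [interior_Icc] at hy; exact hy.2.le))
    exact le_max_of_le_left (hanti ⟨le_rfl, hx.1.trans hxc⟩ ⟨hx.1, hxc⟩ hx.1)
  · have hmono : MonotoneOn h (Icc c b) :=
      monotoneOn_of_hasDerivWithinAt_nonneg (convex_Icc c b) hcont.continuousOn
        (fun y _ => (hh y).hasDerivWithinAt)
        (fun y hy => hpos y (by rw [interior_Icc] at hy; exact hy.1.le))
    exact le_max_of_le_right (hmono ⟨hcx, hx.2⟩ ⟨hcx.trans hx.2, le_rfl⟩ hx.2)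

lemma ofReal_intervalIntegral_norm_le_mul_eLpNorm {F : Type*} [NormedAddCommGroup F]
    {f : ℝ → F} {a b : ℝ} (hab : a ≤ b) (hf : IntegrableOn f (Icc a b)) {p : ℝ≥0∞}
    (hp : 1 ≤ p) :
    ENNReal.ofReal (∫ t in a..b, ‖f t‖) ≤
      ENNReal.ofReal (b - a) ^ (1 - 1 / p).toReal * eLpNorm f p (volume.restrict (Icc a b)) := by
  have hexp : 1 / (1 : ℝ≥0∞).toReal - 1 / p.toReal = (1 - 1 / p).toReal := by
    rcases eq_or_ne p ∞ with rfl | hp_top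
    · simp
    · rw [ENNReal.toReal_sub_of_le (by simpa [one_div] using ENNReal.inv_le_one.2 hp)
        ENNReal.one_ne_top]
      simp [ENNReal.toReal_inv]
  have h := eLpNorm_le_eLpNorm_mul_rpow_measure_univ hp hf.aestronglyMeasurable
  rw [Measure.restrict_apply_univ, Real.volume_Icc, hexp, eLpNorm_one_eq_lintegral_enorm,
    ← ofReal_integral_norm_eq_lintegral_enorm hf, integral_Icc_eq_integral_Ioc,
    ← intervalIntegral.integral_of_le hab] at h
  rwa [mul_comm] at h

namespace Polynomial

noncomputable def bubble (a b : ℝ) : ℝ[X] := (X - C a) * (X - C b)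

noncomputable def rodrigues (a b : ℝ) (n : ℕ) : ℝ[X] := derivative^[n] (bubble a b ^ n)

variable {a b : ℝ}

@[simp]
lemma eval_bubble (x : ℝ) : (bubble a b).eval x = (x - a) * (x - b) := by
  simp [bubble]

lemma bubble_comm (a b : ℝ) : bubble a b = bubble b a := mul_comm _ _

lemma rodrigues_comm (a b : ℝ) (n : ℕ) : rodrigues a b n = rodrigues b a n := by
  rw [rodrigues, rodrigues, bubble_comm]

lemma derivative_bubble : derivative (bubble a b) = 2 * X - C (a + b) := by
  simp only [bubble, derivative_mul, derivative_X_sub_C, C_add]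
  ring

lemma derivative_derivative_bubble : derivative (derivative (bubble a b)) = 2 := by
  simp [derivative_bubble]

lemma natDegree_bubble_le : (bubble a b).natDegree ≤ 2 :=
  natDegree_mul_le_of_le (natDegree_X_sub_C_le a) (natDegree_X_sub_C_le b)

lemma natDegree_rodrigues_le (n : ℕ) : (rodrigues a b n).natDegree ≤ n := by
  have := natDegree_pow_le_of_le n (natDegree_bubble_le (a := a) (b := b))
  have := natDegree_iterate_derivative (bubble a b ^ n) n
  rw [rodrigues]
  omega

lemma eval_iterate_derivative_bubble_pow_eq_zero {n k : ℕ} (hk : k < n) {x : ℝ}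
    (hx : (bubble a b).eval x = 0) : (derivative^[k] (bubble a b ^ n)).eval x = 0 := by
  obtain ⟨q, hq⟩ := pow_sub_dvd_iterate_derivative_pow (bubble a b) n k
  rw [hq, eval_mul, eval_pow, hx, zero_pow (by omega), zero_mul]

lemma eval_rodrigues_right (a b : ℝ) (n : ℕ) :
    (rodrigues a b n).eval b = n.factorial * (b - a) ^ n := by
  rw [rodrigues, bubble, mul_pow, iterate_derivative_mul, eval_finsetSum,
    Finset.sum_eq_single n]
  · simp [iterate_derivative_X_sub_pow_self, mul_comm]
  · intro k hk hkn
    have hk : k < n := lt_of_le_of_ne (Finset.mem_range_succ_iff.mp hk) hkn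
    simp [iterate_derivative_X_sub_pow, zero_pow (Nat.sub_ne_zero_of_lt hk)]
  · simp

lemma eval_rodrigues_left (a b : ℝ) (n : ℕ) :
    (rodrigues a b n).eval a = n.factorial * (a - b) ^ n := by
  rw [rodrigues_comm, eval_rodrigues_right]

lemma iterate_derivative_bubble_mul_derivative (f : ℝ[X]) (m : ℕ) :
    derivative^[m + 1] (bubble a b * derivative f) =
      bubble a b * derivative^[m + 2] f + (m + 1) * derivative (bubble a b) *
        derivative^[m + 1] f + (m + 1) * m * derivative^[m] f := by
  induction m with
  | zero => simp [derivative_mul]; ring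
  | succ m ih =>
    rw [Function.iterate_succ_apply', ih]
    simp only [Function.iterate_succ_apply', derivative_mul, derivative_derivative_bubble,
      derivative_add, derivative_natCast, derivative_one]
    push_cast
    ring

lemma iterate_derivative_derivative_bubble_mul (g : ℝ[X]) (m : ℕ) :
    derivative^[m + 1] (derivative (bubble a b) * g) =
      derivative (bubble a b) * derivative^[m + 1] g + 2 * (m + 1) * derivative^[m] g := by
  induction m with
  | zero => simp [derivative_mul, derivative_derivative_bubble]; ring
  | succ m ih =>
    rw [Function.iterate_succ_apply', ih]
    simp only [Function.iterate_succ_apply', derivative_mul, derivative_derivative_bubble,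
      derivative_add, derivative_natCast, derivative_ofNat, derivative_one]
    push_cast
    ring

lemma bubble_mul_derivative_bubble_pow (n : ℕ) :
    bubble a b * derivative (bubble a b ^ n) =
      n * derivative (bubble a b) * bubble a b ^ n := by
  cases n with
  | zero => simp
  | succ n => rw [derivative_pow, pow_succ]; simp; ring

lemma rodrigues_ode (n : ℕ) :
    bubble a b * derivative (derivative (rodrigues a b n)) +
      derivative (bubble a b) * derivative (rodrigues a b n) =
        (n * (n + 1) : ℝ[X]) * rodrigues a b n := by
  -- differentiate `w (wⁿ)' = n w' wⁿ` exactly `n + 1` times with Leibniz' rule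
  have h := congrArg (derivative^[n + 1]) (bubble_mul_derivative_bubble_pow (a := a) (b := b) n)
  rw [iterate_derivative_bubble_mul_derivative, mul_assoc (n : ℝ[X]),
    iterate_derivative_natCast_mul, iterate_derivative_derivative_bubble_mul] at h
  simp only [rodrigues, ← Function.iterate_succ_apply' derivative] at h ⊢
  linear_combination h

lemma derivative_rodrigues_energy (n : ℕ) :
    derivative ((n * (n + 1) : ℝ[X]) * rodrigues a b n ^ 2 -
        bubble a b * derivative (rodrigues a b n) ^ 2) =
      derivative (bubble a b) * derivative (rodrigues a b n) ^ 2 := by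
  simp only [derivative_sub, derivative_mul, derivative_sq, derivative_natCast,
    derivative_add, derivative_one, map_ofNat]
  linear_combination (-2 * derivative (rodrigues a b n)) * rodrigues_ode (a := a) (b := b) n

lemma abs_eval_rodrigues_le (n : ℕ) {x : ℝ} (hx : x ∈ Icc a b) :
    |(rodrigues a b n).eval x| ≤ n.factorial * (b - a) ^ n := by
  rcases n.eq_zero_or_pos with rfl | hn
  · simp [rodrigues]
  -- The energy `E` dominates `n (n + 1) P²` on `[a, b]`, where `w ≤ 0`, equals it at the
  -- endpoints, where `w = 0`, and is maximal there since `E' = w' P'²` and `w' ≷ 0` as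
  -- `x ≷ (a + b) / 2`.
  set E := (n * (n + 1) : ℝ[X]) * rodrigues a b n ^ 2 -
    bubble a b * derivative (rodrigues a b n) ^ 2 with hE
  have hmax : E.eval x ≤ max (E.eval a) (E.eval b) := by
    refine le_max_of_hasDerivAt_of_sign_change (c := (a + b) / 2) (fun y => E.hasDerivAt y)
      (fun y hy => ?_) (fun y hy => ?_) hx <;>
    · simp only [hE, derivative_rodrigues_energy, derivative_bubble, eval_mul, eval_pow,
        eval_sub, eval_C, eval_X, eval_ofNat]
      nlinarith [sq_nonneg ((derivative (rodrigues a b n)).eval y)]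
  have hsq_sub : ((a - b) ^ n) ^ 2 = ((b - a) ^ n) ^ 2 :=
    (sq_eq_sq_iff_abs_eq_abs _ _).2 (by rw [abs_pow, abs_pow, abs_sub_comm])
  have hEab : max (E.eval a) (E.eval b) = n * (n + 1) * (n.factorial * (b - a) ^ n) ^ 2 := by
    simp only [hE, eval_sub, eval_mul, eval_pow, eval_bubble, eval_rodrigues_left,
      eval_rodrigues_right, eval_add, eval_natCast, eval_one, mul_pow, hsq_sub]
    simp
  have hwx : (bubble a b).eval x ≤ 0 := by
    rw [eval_bubble]
    exact mul_nonpos_of_nonneg_of_nonpos (by linarith [hx.1]) (by linarith [hx.2])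
  have hsq : (rodrigues a b n).eval x ^ 2 ≤ (n.factorial * (b - a) ^ n) ^ 2 := by
    refine le_of_mul_le_mul_left ?_ (by positivity : (0 : ℝ) < n * (n + 1))
    rw [hEab] at hmax
    simp only [hE, eval_sub, eval_mul, eval_pow, eval_add, eval_natCast, eval_one] at hmax
    nlinarith [sq_nonneg ((derivative (rodrigues a b n)).eval x)]
  exact abs_le_of_sq_le_sq hsq (by have := hx.1.trans hx.2; positivity)

lemma integral_eval_derivative_mul_eval (p q : ℝ[X]) :
    ∫ x in a..b, (derivative p).eval x * q.eval x =
      p.eval b * q.eval b - p.eval a * q.eval a -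
        ∫ x in a..b, p.eval x * (derivative q).eval x := by
  have := intervalIntegral.integral_mul_deriv_eq_deriv_mul (a := a) (b := b)
    (fun x _ => q.hasDerivAt x) (fun x _ => p.hasDerivAt x)
    ((derivative q).continuous.intervalIntegrable a b)
    ((derivative p).continuous.intervalIntegrable a b)
  simpa only [mul_comm (q.eval _), mul_comm ((derivative q).eval _)] using this

lemma integral_iterate_derivative_bubble_pow_mul {n k : ℕ} (hk : k ≤ n) (q : ℝ[X]) :
    ∫ x in a..b, (derivative^[k] (bubble a b ^ n)).eval x * q.eval x =
      (-1) ^ k * ∫ x in a..b, (bubble a b ^ n).eval x * (derivative^[k] q).eval x := by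
  induction k generalizing q with
  | zero => simp
  | succ k ih =>
    have hzero := fun x => eval_iterate_derivative_bubble_pow_eq_zero (a := a) (b := b)
      (x := x) (Nat.lt_of_succ_le hk)
    rw [Function.iterate_succ_apply', integral_eval_derivative_mul_eval,
      hzero a (by simp), hzero b (by simp), ih (Nat.le_of_succ_le hk),
      ← Function.iterate_succ_apply]
    ring

lemma integral_rodrigues_mul_derivative_eq_zero {n : ℕ} {φ : ℝ[X]} (hφ : φ.natDegree ≤ n) :
    ∫ x in a..b, (rodrigues a b n).eval x * (derivative φ).eval x = 0 := by
  rw [rodrigues, integral_iterate_derivative_bubble_pow_mul le_rfl,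
    ← Function.iterate_succ_apply, iterate_derivative_eq_zero (Nat.lt_succ_of_le hφ)]
  simp

noncomputable def legendreIcc (a b : ℝ) (n : ℕ) : ℝ[X] :=
  C ((n.factorial * (a - b) ^ n)⁻¹) * rodrigues a b n

lemma natDegree_legendreIcc_le (n : ℕ) : (legendreIcc a b n).natDegree ≤ n :=
  (natDegree_C_mul_le _ _).trans (natDegree_rodrigues_le n)

lemma integral_legendreIcc_mul_derivative_eq_zero {n : ℕ} {φ : ℝ[X]} (hφ : φ.natDegree ≤ n) :
    ∫ x in a..b, (legendreIcc a b n).eval x * (derivative φ).eval x = 0 := by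
  simp only [legendreIcc, eval_mul, eval_C, mul_assoc, intervalIntegral.integral_const_mul,
    integral_rodrigues_mul_derivative_eq_zero hφ, mul_zero]

/-- Up to a constant factor, the Radau polynomial of degree `r + 1` on `[a, b]` with root `b`. -/
noncomputable def radauIcc (a b : ℝ) (r : ℕ) : ℝ[X] :=
  C 2⁻¹ * (legendreIcc a b r + legendreIcc a b (r + 1))

lemma natDegree_derivative_radauIcc_le (r : ℕ) :
    (derivative (radauIcc a b r)).natDegree ≤ r := by
  have : (radauIcc a b r).natDegree ≤ r + 1 :=
    (natDegree_C_mul_le _ _).trans <| natDegree_add_le_of_degree_le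
      ((natDegree_legendreIcc_le r).trans r.le_succ) (natDegree_legendreIcc_le (r + 1))
  have := natDegree_derivative_le (radauIcc a b r)
  omega

variable (hab : a < b)
include hab

lemma eval_legendreIcc_left (n : ℕ) : (legendreIcc a b n).eval a = 1 := by
  have : (a - b) ^ n ≠ 0 := pow_ne_zero _ (sub_ne_zero.2 hab.ne)
  rw [legendreIcc, eval_mul, eval_C, eval_rodrigues_left]
  field_simp

lemma eval_legendreIcc_right (n : ℕ) : (legendreIcc a b n).eval b = (-1) ^ n := by
  have : (a - b) ^ n ≠ 0 := pow_ne_zero _ (sub_ne_zero.2 hab.ne)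
  rw [legendreIcc, eval_mul, eval_C, eval_rodrigues_right, ← neg_sub a b, neg_pow]
  field_simp

lemma abs_eval_legendreIcc_le (n : ℕ) {x : ℝ} (hx : x ∈ Icc a b) :
    |(legendreIcc a b n).eval x| ≤ 1 := by
  have hpos : (0 : ℝ) < n.factorial * (b - a) ^ n := by
    have := sub_pos.2 hab
    positivity
  rw [legendreIcc, eval_mul, eval_C, abs_mul, abs_inv, abs_mul, abs_pow, abs_sub_comm,
    abs_of_pos (sub_pos.2 hab), Nat.abs_cast, inv_mul_le_iff₀ hpos, mul_one]
  exact abs_eval_rodrigues_le n hx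

lemma eval_radauIcc_left (r : ℕ) : (radauIcc a b r).eval a = 1 := by
  simp only [radauIcc, eval_mul, eval_C, eval_add, eval_legendreIcc_left hab]
  norm_num

lemma eval_radauIcc_right (r : ℕ) : (radauIcc a b r).eval b = 0 := by
  simp only [radauIcc, eval_mul, eval_C, eval_add, eval_legendreIcc_right hab, pow_succ]
  ring

lemma abs_eval_radauIcc_le (r : ℕ) {x : ℝ} (hx : x ∈ Icc a b) :
    |(radauIcc a b r).eval x| ≤ 1 := by
  simp only [radauIcc, eval_mul, eval_C, eval_add, abs_mul, abs_inv, abs_two]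
  linarith [abs_add_le ((legendreIcc a b r).eval x) ((legendreIcc a b (r + 1)).eval x),
    abs_eval_legendreIcc_le hab r hx, abs_eval_legendreIcc_le hab (r + 1) hx]

lemma integral_neg_derivative_radauIcc_mul {r : ℕ} {φ : ℝ[X]} (hφ : φ.natDegree ≤ r) :
    ∫ x in a..b, (-derivative (radauIcc a b r)).eval x * φ.eval x = φ.eval a := by
  have hint (p q : ℝ[X]) : IntervalIntegrable (fun x => p.eval x * q.eval x) volume a b :=
    (p.continuous.mul q.continuous).intervalIntegrable a b
  have horth : ∫ x in a..b, (radauIcc a b r).eval x * (derivative φ).eval x = 0 := by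
    simp only [radauIcc, eval_mul, eval_C, eval_add, mul_assoc, add_mul,
      intervalIntegral.integral_const_mul]
    rw [intervalIntegral.integral_add (hint _ _) (hint _ _),
      integral_legendreIcc_mul_derivative_eq_zero hφ,
      integral_legendreIcc_mul_derivative_eq_zero (hφ.trans r.le_succ)]
    simp
  simp only [eval_neg, neg_mul, intervalIntegral.integral_neg, integral_eval_derivative_mul_eval,
    eval_radauIcc_left hab, eval_radauIcc_right hab, horth]
  ring

end Polynomial

section XPoly

variable {E : Type*} [NormedAddCommGroup E] [NormedSpace ℝ E] {r : ℕ} {U V : ℝ → E}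

lemma IsXPoly.contDiff (hU : IsXPoly r U) : ContDiff ℝ ⊤ U := by
  obtain ⟨c, hc⟩ := hU
  rw [funext hc]
  fun_prop

lemma IsXPoly.continuous (hU : IsXPoly r U) : Continuous U := hU.contDiff.continuous

lemma IsXPoly.differentiable (hU : IsXPoly r U) : Differentiable ℝ U :=
  hU.contDiff.differentiable (by simp)

lemma IsXPoly.continuous_deriv (hU : IsXPoly r U) : Continuous (deriv U) :=
  hU.contDiff.continuous_deriv (by simp)

lemma IsXPoly.sub (hU : IsXPoly r U) (hV : IsXPoly r V) : IsXPoly r (fun t => U t - V t) := by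
  obtain ⟨c, hc⟩ := hU
  obtain ⟨d, hd⟩ := hV
  exact ⟨c - d, fun t => by simp only [hc, hd, Pi.sub_apply, smul_sub, Finset.sum_sub_distrib]⟩

lemma isXPoly_eval_smul {q : ℝ[X]} (hq : q.natDegree ≤ r) (x : E) :
    IsXPoly r (fun t => q.eval t • x) :=
  ⟨fun i => q.coeff i • x, fun t => by
    simp only [eval_eq_sum_range' (Nat.lt_succ_of_le hq), Finset.sum_smul, smul_smul, mul_comm]⟩

end XPoly

section Lifting

variable {E : Type*} [NormedAddCommGroup E] [InnerProductSpace ℝ E] {a b : ℝ} {r : ℕ}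
  {u : E} {U L L' : ℝ → E}

lemma IsXPoly.exists_inner_eq_eval (hU : IsXPoly r U) (y : E) :
    ∃ φ : ℝ[X], φ.natDegree ≤ r ∧ (∀ t, ⟪U t, y⟫ = φ.eval t) ∧
      ∀ t, ⟪deriv U t, y⟫ = (derivative φ).eval t := by
  obtain ⟨c, hc⟩ := id hU
  refine ⟨∑ i ∈ Finset.range (r + 1), C ⟪c i, y⟫ * X ^ i,
    natDegree_sum_le_of_forall_le _ _ fun i hi =>
      (natDegree_C_mul_X_pow_le _ _).trans (Finset.mem_range_succ_iff.mp hi), ?_⟩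
  have hφ (t : ℝ) : ⟪U t, y⟫ = (∑ i ∈ Finset.range (r + 1), C ⟪c i, y⟫ * X ^ i).eval t := by
    simp only [hc, sum_inner, real_inner_smul_left, eval_finsetSum, eval_mul, eval_C, eval_pow,
      eval_X, mul_comm]
  refine ⟨hφ, fun t => ?_⟩
  have hderiv := (hU.differentiable t).hasDerivAt.inner ℝ (hasDerivAt_const t y)
  rw [inner_zero_right, zero_add, funext hφ] at hderiv
  exact hderiv.unique (Polynomial.hasDerivAt _ t)

lemma eqOn_zero_of_integral_inner_self_eq_zero (hab : a < b) {D : ℝ → E} (hD : Continuous D)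
    (h : ∫ t in a..b, ⟪D t, D t⟫ = 0) : EqOn D 0 (Icc a b) := by
  have hcont : Continuous fun t => ⟪D t, D t⟫ := hD.inner hD
  have hae := (intervalIntegral.integral_eq_zero_iff_of_le_of_nonneg_ae hab.le
    (Filter.Eventually.of_forall fun t => real_inner_self_nonneg)
    (hcont.intervalIntegrable a b)).1 h
  rw [Measure.restrict_congr_set Ioc_ae_eq_Icc] at hae
  intro t ht
  exact inner_self_eq_zero.1 (Measure.eqOn_Icc_of_ae_eq volume hab.ne hae hcont.continuousOn
    continuousOn_const ht :)

def IsLifting (a b : ℝ) (r : ℕ) (u : E) (L : ℝ → E) : Prop :=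
  IsXPoly r L ∧ ∀ V : ℝ → E, IsXPoly r V → ∫ t in a..b, ⟪L t, V t⟫ = ⟪u, V a⟫

lemma isLifting_radauIcc (hab : a < b) (r : ℕ) (u : E) :
    IsLifting a b r u (fun t => (-derivative (radauIcc a b r)).eval t • u) := by
  refine ⟨isXPoly_eval_smul ((natDegree_neg _).trans_le (natDegree_derivative_radauIcc_le r)) u,
    fun V hV => ?_⟩
  obtain ⟨φ, hφr, hφ, -⟩ := hV.exists_inner_eq_eval u
  have hφ' (t : ℝ) : ⟪u, V t⟫ = φ.eval t := by rw [real_inner_comm, hφ]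
  simp only [real_inner_smul_left, hφ']
  exact integral_neg_derivative_radauIcc_mul hab hφr

lemma IsLifting.eqOn (hab : a < b) (hL : IsLifting a b r u L) (hL' : IsLifting a b r u L') :
    EqOn L L' (Icc a b) := by
  have hD := hL.1.sub hL'.1
  have hzero : ∫ t in a..b, ⟪L t - L' t, L t - L' t⟫ = 0 := by
    simp only [inner_sub_left]
    rw [intervalIntegral.integral_sub
      ((hL.1.continuous.inner hD.continuous).intervalIntegrable _ _)
      ((hL'.1.continuous.inner hD.continuous).intervalIntegrable _ _),
      hL.2 _ hD, hL'.2 _ hD, sub_self]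
  exact fun t ht => sub_eq_zero.1
    (eqOn_zero_of_integral_inner_self_eq_zero hab hD.continuous hzero ht)

lemma IsXPoly.norm_le_integral_norm_deriv_add (hab : a < b) (hU : IsXPoly r U)
    (hL : IsLifting a b r (U a) L) : ‖U a‖ ≤ ∫ t in a..b, ‖deriv U t + L t‖ := by
  set P := legendreIcc a b r
  set N := ∫ t in a..b, ‖deriv U t + L t‖
  have hPc : Continuous fun t => P.eval t • U a := P.continuous.smul continuous_const
  have hχc : Continuous fun t => deriv U t + L t := hU.continuous_deriv.add hL.1.continuous
  obtain ⟨φ, hφr, -, hφ'⟩ := hU.exists_inner_eq_eval (U a)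
  have hderiv : ∫ t in a..b, ⟪deriv U t, P.eval t • U a⟫ = 0 := by
    simp only [real_inner_smul_right, hφ']
    exact integral_legendreIcc_mul_derivative_eq_zero hφr
  have hlift : ∫ t in a..b, ⟪L t, P.eval t • U a⟫ = ‖U a‖ ^ 2 := by
    rw [hL.2 _ (isXPoly_eval_smul (natDegree_legendreIcc_le r) (U a)),
      eval_legendreIcc_left hab, one_smul, real_inner_self_eq_norm_sq]
  have hsq : ‖U a‖ ^ 2 ≤ N * ‖U a‖ := calc
    ‖U a‖ ^ 2 = ∫ t in a..b, ⟪deriv U t + L t, P.eval t • U a⟫ := by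
      simp only [inner_add_left]
      rw [intervalIntegral.integral_add
        ((hU.continuous_deriv.inner hPc).intervalIntegrable _ _)
        ((hL.1.continuous.inner hPc).intervalIntegrable _ _), hderiv, hlift, zero_add]
    _ ≤ ∫ t in a..b, ‖deriv U t + L t‖ * ‖U a‖ := by
      refine intervalIntegral.integral_mono_on hab.le ((hχc.inner hPc).intervalIntegrable _ _)
        ((hχc.norm.mul continuous_const).intervalIntegrable _ _) fun t ht => ?_
      refine (real_inner_le_norm _ _).trans (mul_le_mul_of_nonneg_left ?_ (norm_nonneg _))
      rw [norm_smul, Real.norm_eq_abs]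
      exact mul_le_of_le_one_left (norm_nonneg _) (abs_eval_legendreIcc_le hab r ht)
    _ = N * ‖U a‖ := intervalIntegral.integral_mul_const _ _
  have hN : 0 ≤ N := intervalIntegral.integral_nonneg hab.le fun t _ => norm_nonneg _
  nlinarith [norm_nonneg (U a)]

variable [CompleteSpace E]

lemma IsLifting.integral_eq (hab : a < b) (hL : IsLifting a b r u L) {t : ℝ}
    (ht : t ∈ Icc a b) : ∫ s in a..t, L s = (1 - (radauIcc a b r).eval t) • u := by
  have hEq : EqOn L (fun s => (-derivative (radauIcc a b r)).eval s • u) (uIcc a t) := by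
    rw [uIcc_of_le ht.1]
    exact (hL.eqOn hab (isLifting_radauIcc hab r u)).mono (Icc_subset_Icc_right ht.2)
  rw [intervalIntegral.integral_congr hEq, intervalIntegral.integral_smul_const,
    ← derivative_neg, intervalIntegral.integral_eq_sub_of_hasDerivAt
      (fun x _ => (-radauIcc a b r).hasDerivAt x)
      ((Polynomial.continuous _).intervalIntegrable _ _),
    eval_neg, eval_neg, eval_radauIcc_left hab]
  ring_nf

lemma IsXPoly.eq_radauIcc_smul_add_integral (hab : a < b) (hU : IsXPoly r U)
    (hL : IsLifting a b r (U a) L) {t : ℝ} (ht : t ∈ Icc a b) :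
    U t = (radauIcc a b r).eval t • U a + ∫ s in a..t, (deriv U s + L s) := by
  rw [intervalIntegral.integral_add (hU.continuous_deriv.intervalIntegrable _ _)
    (hL.1.continuous.intervalIntegrable _ _),
    intervalIntegral.integral_eq_sub_of_hasDerivAt (fun x _ => (hU.differentiable x).hasDerivAt)
      (hU.continuous_deriv.intervalIntegrable _ _), hL.integral_eq hab ht]
  module

lemma IsXPoly.norm_le_two_mul_integral_norm_deriv_add (hab : a < b) (hU : IsXPoly r U)
    (hL : IsLifting a b r (U a) L) {t : ℝ} (ht : t ∈ Icc a b) :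
    ‖U t‖ ≤ 2 * ∫ s in a..b, ‖deriv U s + L s‖ := by
  set N := ∫ s in a..b, ‖deriv U s + L s‖
  have hχc : Continuous fun s => deriv U s + L s := hU.continuous_deriv.add hL.1.continuous
  rw [hU.eq_radauIcc_smul_add_integral hab hL ht]
  calc _ ≤ |(radauIcc a b r).eval t| * ‖U a‖ + ∫ s in a..t, ‖deriv U s + L s‖ := by
        rw [← Real.norm_eq_abs, ← norm_smul]
        exact (norm_add_le _ _).trans
          (add_le_add le_rfl (intervalIntegral.norm_integral_le_integral_norm ht.1))
    _ ≤ 1 * N + N := by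
        gcongr
        · exact abs_eval_radauIcc_le hab r ht
        · exact hU.norm_le_integral_norm_deriv_add hab hL
        · exact intervalIntegral.integral_mono_interval le_rfl ht.1 ht.2
            (Filter.Eventually.of_forall fun s => norm_nonneg _) (hχc.norm.intervalIntegrable _ _)
    _ = 2 * N := by ring

end Lifting

/-- Proposition 3.2: stability of the inverse of the discrete dG time derivative
operator `χ(U) = U' + L`, with explicit constant `C_χ = 2`, uniformly in the
polynomial degree `r` and in the step length `k`. -/
theorem dG_time_operator_stability
    {X : Type*} [NormedAddCommGroup X] [InnerProductSpace ℝ X] [CompleteSpace X]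
    (a b : ℝ) (hab : a < b) (k : ℝ) (hk : k = b - a) (r : ℕ)
    (U L : ℝ → X) (hU : IsXPoly r U) (hL : IsXPoly r L)
    (hLdef : ∀ V : ℝ → X, IsXPoly r V →
      (∫ t in a..b, ⟪L t, V t⟫) = ⟪U a, V a⟫)
    (p : ℝ≥0∞) (hp : 1 ≤ p) :
    ∀ t ∈ Set.Icc a b, (‖U t‖₊ : ℝ≥0∞) ≤
      2 * ENNReal.ofReal k ^ (1 - 1 / p).toReal *
        eLpNorm (fun t => deriv U t + L t) p (volume.restrict (Set.Icc a b)) := by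
  intro t ht
  have hχc : Continuous fun s => deriv U s + L s := hU.continuous_deriv.add hL.continuous
  calc (‖U t‖₊ : ℝ≥0∞) = ENNReal.ofReal ‖U t‖ := (ofReal_norm _).symm
    _ ≤ ENNReal.ofReal (2 * ∫ s in a..b, ‖deriv U s + L s‖) :=
        ENNReal.ofReal_le_ofReal (hU.norm_le_two_mul_integral_norm_deriv_add hab ⟨hL, hLdef⟩ ht)
    _ = 2 * ENNReal.ofReal (∫ s in a..b, ‖deriv U s + L s‖) := by
        rw [ENNReal.ofReal_mul zero_le_two, ENNReal.ofReal_ofNat]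
    _ ≤ 2 * (ENNReal.ofReal k ^ (1 - 1 / p).toReal *
          eLpNorm (fun s => deriv U s + L s) p (volume.restrict (Icc a b))) := by
        rw [hk]
        gcongr
        exact ofReal_intervalIntegral_norm_le_mul_eLpNorm hab.le hχc.integrableOn_Icc hp
    _ = _ := (mul_assoc _ _ _).symm
end

section
/- Let H be a real Hilbert space, H_m ⊆ H a finite-dimensional subspace, and π : H → H_m the orthogonal projection. Let F : [0,T] × H → H be continuous. Fix a ∈ [0,T), u_prev ∈ H, and κ > 0, θ > 0 with a + θ ≤ T. Let B = {y ∈ H_m : ‖y − π(u_prev)‖ ≤ κ}, K = max_{(t,y) ∈ [a,a+θ] × B} ‖F(t,y)‖, and suppose there is L_B ≥ 0 with ‖F(t,u) − F(t,v)‖ ≤ L_B ‖u − v‖ for all t ∈ [a, a+θ] and all u, v ∈ B. If 0 < k ≤ θ, k·K ≤ κ, and k·L_B < 1, then for every r ∈ ℕ there exists exactly one H_m-valued polynomial U of degree at most r+1 with U(a) = π(u_prev), U(t) ∈ B for all t ∈ [a, a+k], and ∫_a^{a+k} ⟨U'(t), V(t)⟩ dt = ∫_a^{a+k} ⟨F(t,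 U(t)), V(t)⟩ dt for every H_m-valued polynomial V of degree at most r. -/
/-!
Write a candidate solution as `U(t) = p + ∫_a^t w` with `p = π u_prev` and `w = U'` an
`H_m`-valued polynomial of degree at most `r`. The cG equations then say exactly that `w` is the
`L²(a, a + k)`-orthogonal projection of `t ↦ F(t, U(t))` onto these polynomials. By
Cauchy–Schwarz, `‖U(t) - p‖ ≤ √k ‖w‖_{L²}`, and the projection of a function bounded by `M` has
`L²`-norm at most `√k M`. Hence on the closed set of those `w` whose `U` stays in `B`, the map
`w ↦ proj F(·, U)` maps the set into itself because `k K ≤ κ`, and is a contraction with constant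
`k L_B < 1`; Banach's fixed point theorem gives existence and uniqueness.
-/

open MeasureTheory Set
open scoped RealInnerProductSpace

/-- `U : ℝ → H` is an `H`-valued polynomial of degree at most `r`
with coefficients in the subspace `S`. -/
def IsHmPoly {H : Type*} [NormedAddCommGroup H] [InnerProductSpace ℝ H]
    (S : Submodule ℝ H) (r : ℕ) (U : ℝ → H) : Prop :=
  ∃ c : ℕ → H, (∀ i, c i ∈ S) ∧ ∀ t : ℝ, U t = ∑ i ∈ Finset.range (r + 1), t ^ i • c i

open scoped NNReal

theorem existsUnique_fixedPoint_of_mapsTo {α : Type*} [MetricSpace α] [CompleteSpace α]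
    {f : α → α} {s : Set α} {K : ℝ≥0} (hs : IsClosed s) (hne : s.Nonempty) (hfs : MapsTo f s s)
    (hK : K < 1) (hf : LipschitzOnWith K f s) : ∃! x, x ∈ s ∧ f x = x := by
  have : CompleteSpace s := hs.completeSpace_coe
  have : Nonempty s := hne.to_subtype
  have hc : ContractingWith K (hfs.restrict f s s) := ⟨hK, hf.mapsToRestrict hfs⟩
  refine ⟨hc.fixedPoint, ⟨hc.fixedPoint.2, congrArg Subtype.val hc.fixedPoint_isFixedPt⟩, ?_⟩
  rintro x ⟨hxs, hx⟩
  exact congrArg Subtype.val (hc.fixedPoint_unique (x := ⟨x, hxs⟩) (Subtype.ext hx))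

theorem sq_integral_le_mul_integral_sq {f : ℝ → ℝ} {a b : ℝ} (hab : a ≤ b)
    (hf : ContinuousOn f (Icc a b)) :
    (∫ t in a..b, f t) ^ 2 ≤ (b - a) * ∫ t in a..b, f t ^ 2 := by
  have hf' : ContinuousOn f (uIcc a b) := by rwa [uIcc_of_le hab]
  have hi : IntervalIntegrable f volume a b := hf'.intervalIntegrable
  have hi2 : IntervalIntegrable (fun t => f t ^ 2) volume a b := (hf'.pow 2).intervalIntegrable
  have hquad : ∀ x : ℝ,
      0 ≤ (b - a) * (x * x) + (-2 * ∫ t in a..b, f t) * x + ∫ t in a..b, f t ^ 2 := by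
    intro x
    have hexp : ∫ t in a..b, (x - f t) ^ 2
        = (b - a) * (x * x) + (-2 * ∫ t in a..b, f t) * x + ∫ t in a..b, f t ^ 2 := by
      simp only [sub_sq]
      rw [intervalIntegral.integral_add (intervalIntegrable_const.sub (hi.const_mul _)) hi2,
        intervalIntegral.integral_sub intervalIntegrable_const (hi.const_mul _),
        intervalIntegral.integral_const_mul, intervalIntegral.integral_const, smul_eq_mul]
      ring
    exact hexp ▸ intervalIntegral.integral_nonneg hab fun t _ => sq_nonneg _
  have := discrim_le_zero hquad
  rw [discrim] at this
  linarith

theorem hasDerivAt_sum_pow_smul {E : Type*} [NormedAddCommGroup E] [NormedSpace ℝ E]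
    (c : ℕ → E) (n : ℕ) (t : ℝ) :
    HasDerivAt (fun s => ∑ i ∈ Finset.range (n + 2), s ^ i • c i)
      (∑ i ∈ Finset.range (n + 1), t ^ i • ((i + 1 : ℝ) • c (i + 1))) t := by
  convert HasDerivAt.fun_sum fun i _ => (hasDerivAt_pow i t).smul_const (c i) using 1
  rw [Finset.sum_range_succ' _ (n + 1)]
  simp [smul_smul, mul_comm]

section

variable {H : Type*} [NormedAddCommGroup H] [InnerProductSpace ℝ H]

namespace IsHmPoly

variable {S : Submodule ℝ H} {n : ℕ} {U V : ℝ → H}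

theorem zero : IsHmPoly S n 0 :=
  ⟨0, fun _ => S.zero_mem, fun _ => by simp⟩

theorem add (hU : IsHmPoly S n U) (hV : IsHmPoly S n V) : IsHmPoly S n (U + V) := by
  obtain ⟨c, hc, hU⟩ := hU
  obtain ⟨d, hd, hV⟩ := hV
  exact ⟨c + d, fun i => S.add_mem (hc i) (hd i), fun t => by
    simp [hU, hV, smul_add, Finset.sum_add_distrib]⟩

theorem smul (r : ℝ) (hU : IsHmPoly S n U) : IsHmPoly S n (r • U) := by
  obtain ⟨c, hc, hU⟩ := hU
  exact ⟨r • c, fun i => S.smul_mem r (hc i), fun t => by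
    simp [hU, Finset.smul_sum, smul_comm r]⟩

theorem const {x : H} (hx : x ∈ S) : IsHmPoly S n fun _ => x :=
  ⟨Pi.single 0 x, fun i => by by_cases h : i = 0 <;> simp [h, hx], fun t => by
    rw [Finset.sum_eq_single_of_mem 0 (by simp) fun i _ hi => by simp [hi]]
    simp⟩

theorem mem (hU : IsHmPoly S n U) (t : ℝ) : U t ∈ S := by
  obtain ⟨c, hc, hU⟩ := hU
  exact hU t ▸ S.sum_mem fun i _ => S.smul_mem _ (hc i)

theorem continuous (hU : IsHmPoly S n U) : Continuous U := by
  obtain ⟨c, -, hU⟩ := hU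
  rw [funext hU]
  fun_prop

theorem differentiable (hU : IsHmPoly S n U) : Differentiable ℝ U := by
  obtain ⟨c, -, hU⟩ := hU
  rw [funext hU]
  fun_prop

theorem eq_zero_of_infinite (hU : IsHmPoly S n U) (h : {t | U t = 0}.Infinite) : U = 0 := by
  obtain ⟨c, -, hU⟩ := hU
  funext t
  refine ext_inner_right ℝ fun y => ?_
  obtain ⟨p, heval⟩ : ∃ p : Polynomial ℝ, ∀ s, p.eval s = ⟪U s, y⟫ :=
    ⟨∑ i ∈ Finset.range (n + 1), Polynomial.C ⟪c i, y⟫ * Polynomial.X ^ i, fun s => by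
      simp only [Polynomial.eval_finsetSum, Polynomial.eval_mul, Polynomial.eval_C,
        Polynomial.eval_pow, Polynomial.eval_X, hU, sum_inner, real_inner_smul_left, mul_comm]⟩
  have hp : p = 0 := p.eq_zero_of_infinite_isRoot <| h.mono fun s (hs : U s = 0) => by
    rw [mem_ofPred_eq, Polynomial.IsRoot.def, heval, hs, inner_zero_left]
  rw [← heval, hp, Polynomial.eval_zero, Pi.zero_apply, inner_zero_left]

theorem deriv (hU : IsHmPoly S (n + 1) U) : IsHmPoly S n (_root_.deriv U) := by
  obtain ⟨c, hc, hU⟩ := hU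
  refine ⟨fun i => (i + 1 : ℝ) • c (i + 1), fun i => S.smul_mem _ (hc _), fun t => ?_⟩
  rw [funext hU]
  exact (hasDerivAt_sum_pow_smul c n t).deriv

theorem exists_hasDerivAt (hV : IsHmPoly S n V) :
    ∃ U, IsHmPoly S (n + 1) U ∧ ∀ t, HasDerivAt U (V t) t := by
  obtain ⟨c, hc, hV⟩ := hV
  -- coefficient `i` is `c (i - 1) / i`; at `i = 0` the junk values `0⁻¹ = 0` make it `0`
  refine ⟨_, ⟨fun i => (i : ℝ)⁻¹ • c (i - 1), fun i => S.smul_mem _ (hc _), fun _ => rfl⟩,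
    fun t => ?_⟩
  convert hasDerivAt_sum_pow_smul _ n t using 1
  rw [hV]
  refine Finset.sum_congr rfl fun i _ => ?_
  rw [Nat.add_sub_cancel, Nat.cast_succ, smul_inv_smul₀ (by positivity)]

end IsHmPoly

def hmPolySubmodule (S : Submodule ℝ H) (n : ℕ) : Submodule ℝ (ℝ → H) where
  carrier := {U | IsHmPoly S n U}
  zero_mem' := IsHmPoly.zero
  add_mem' := IsHmPoly.add
  smul_mem' r _ := IsHmPoly.smul r

instance (S : Submodule ℝ H) [FiniteDimensional ℝ S] (n : ℕ) :
    FiniteDimensional ℝ (hmPolySubmodule S n) := by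
  let eval : (Fin (n + 1) → S) →ₗ[ℝ] ℝ → H :=
    ∑ i : Fin (n + 1), LinearMap.pi fun t => t ^ (i : ℕ) • S.subtype ∘ₗ LinearMap.proj i
  refine Submodule.finiteDimensional_of_le (S₂ := LinearMap.range eval) ?_
  rintro U ⟨c, hc, hU⟩
  refine ⟨fun i => ⟨c i, hc i⟩, funext fun t => ?_⟩
  simp [eval, hU, Fin.sum_univ_eq_sum_range (fun i => t ^ i • c i)]

/-- `hmPolySubmodule S n`, carrying the inner product of `L²(a, b)`. -/
def PolyL2 (S : Submodule ℝ H) (n : ℕ) (_a _b : ℝ) : Type _ := hmPolySubmodule S n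

namespace PolyL2

variable {S : Submodule ℝ H} {n : ℕ} {a b : ℝ}

instance : AddCommGroup (PolyL2 S n a b) := inferInstanceAs (AddCommGroup (hmPolySubmodule S n))

instance : Module ℝ (PolyL2 S n a b) := inferInstanceAs (Module ℝ (hmPolySubmodule S n))

instance [FiniteDimensional ℝ S] : FiniteDimensional ℝ (PolyL2 S n a b) :=
  inferInstanceAs (FiniteDimensional ℝ (hmPolySubmodule S n))

instance : CoeFun (PolyL2 S n a b) fun _ => ℝ → H := ⟨fun w => Subtype.val w⟩

def mk (U : ℝ → H) (hU : IsHmPoly S n U) : PolyL2 S n a b := (⟨U, hU⟩ : hmPolySubmodule S n)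

@[simp] theorem zero_apply (t : ℝ) : (0 : PolyL2 S n a b) t = 0 := rfl

@[simp] theorem add_apply (w v : PolyL2 S n a b) (t : ℝ) : (w + v) t = w t + v t := rfl

@[simp] theorem sub_apply (w v : PolyL2 S n a b) (t : ℝ) : (w - v) t = w t - v t := rfl

@[simp] theorem smul_apply (r : ℝ) (w : PolyL2 S n a b) (t : ℝ) : (r • w) t = r • w t := rfl

theorem ext {w v : PolyL2 S n a b} (h : ∀ t, w t = v t) : w = v :=
  Subtype.ext (funext h)

theorem isHmPoly (w : PolyL2 S n a b) : IsHmPoly S n w := (w : hmPolySubmodule S n).2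

theorem continuous (w : PolyL2 S n a b) : Continuous w := w.isHmPoly.continuous

theorem intervalIntegrable_inner {g : ℝ → H} (hg : ContinuousOn g (Icc a b)) (hab : a ≤ b)
    (w : PolyL2 S n a b) : IntervalIntegrable (fun t => ⟪g t, w t⟫) volume a b :=
  ((uIcc_of_le hab).symm ▸ hg.inner w.continuous.continuousOn).intervalIntegrable

noncomputable def primitive (p : H) (w : PolyL2 S n a b) (t : ℝ) : H := p + ∫ τ in a..t, w τ

theorem primitive_left (p : H) (w : PolyL2 S n a b) : primitive p w a = p := by
  simp [primitive]

theorem primitive_zero (p : H) (t : ℝ) : primitive p (0 : PolyL2 S n a b) t = p := by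
  simp [primitive]

section Primitive

variable [CompleteSpace H] {p : H} {U : ℝ → H}

theorem hasDerivAt_primitive (p : H) (w : PolyL2 S n a b) (t : ℝ) :
    HasDerivAt (primitive p w) (w t) t :=
  (w.continuous.integral_hasStrictDerivAt a t).hasDerivAt.const_add p

theorem deriv_primitive (p : H) (w : PolyL2 S n a b) : deriv (primitive p w) = w :=
  funext fun t => (hasDerivAt_primitive p w t).deriv

theorem continuous_primitive (p : H) (w : PolyL2 S n a b) : Continuous (primitive p w) :=
  continuous_iff_continuousAt.2 fun t => (hasDerivAt_primitive p w t).continuousAt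

theorem isHmPoly_primitive (hp : p ∈ S) (w : PolyL2 S n a b) :
    IsHmPoly S (n + 1) (primitive p w) := by
  obtain ⟨P, hP, hPw⟩ := w.isHmPoly.exists_hasDerivAt
  have hFTC : primitive p w = (fun _ => p - P a) + P := funext fun t => by
    rw [primitive, intervalIntegral.integral_eq_sub_of_hasDerivAt (fun s _ => hPw s)
      (w.continuous.intervalIntegrable a t), Pi.add_apply]
    abel
  rw [hFTC]
  exact (IsHmPoly.const (S.sub_mem hp (hP.mem a))).add hP

theorem primitive_mk_deriv (hU : IsHmPoly S (n + 1) U) :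
    primitive (U a) (mk (deriv U) hU.deriv : PolyL2 S n a b) = U := funext fun t => by
  show U a + ∫ τ in a..t, deriv U τ = U t
  rw [intervalIntegral.integral_deriv_eq_sub (fun s _ => hU.differentiable s)
    (hU.deriv.continuous.intervalIntegrable a t)]
  abel

theorem continuousOn_comp_primitive {F : ℝ → H → H}
    (hF : ContinuousOn (Function.uncurry F) (Icc a b ×ˢ univ)) (p : H) (w : PolyL2 S n a b) :
    ContinuousOn (fun t => F t (primitive p w t)) (Icc a b) :=
  hF.comp (continuousOn_id.prodMk (continuous_primitive p w).continuousOn)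
    fun _ ht => ⟨ht, mem_univ _⟩

end Primitive

section InnerProduct

variable [hab : Fact (a < b)]

noncomputable instance innerProductSpaceCore : InnerProductSpace.Core ℝ (PolyL2 S n a b) where
  inner w v := ∫ t in a..b, ⟪w t, v t⟫
  conj_inner_symm w v := by simp [real_inner_comm]
  re_inner_nonneg w := intervalIntegral.integral_nonneg hab.out.le fun _ _ => real_inner_self_nonneg
  definite w hw := by
    refine ext fun t => congrFun (w.isHmPoly.eq_zero_of_infinite <| (Icc_infinite hab.out).mono
      fun s hs => ?_) t
    by_contra hws
    exact (intervalIntegral.integral_pos hab.out (f := fun t => ⟪w t, w t⟫)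
      (w.continuous.inner w.continuous).continuousOn (fun _ _ => real_inner_self_nonneg)
      ⟨s, hs, real_inner_self_pos.mpr hws⟩).ne' hw
  add_left w v u := by
    simp only [add_apply, inner_add_left]
    exact intervalIntegral.integral_add (intervalIntegrable_inner w.continuous.continuousOn
      hab.out.le u) (intervalIntegrable_inner v.continuous.continuousOn hab.out.le u)
  smul_left w v r := by
    simp only [smul_apply, real_inner_smul_left, conj_trivial]
    exact intervalIntegral.integral_const_mul r _

noncomputable instance : NormedAddCommGroup (PolyL2 S n a b) :=
  InnerProductSpace.Core.toNormedAddCommGroup (𝕜 := ℝ)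

noncomputable instance : InnerProductSpace ℝ (PolyL2 S n a b) :=
  InnerProductSpace.ofCore _

instance [FiniteDimensional ℝ S] : CompleteSpace (PolyL2 S n a b) :=
  FiniteDimensional.complete ℝ _

theorem inner_def (w v : PolyL2 S n a b) : ⟪w, v⟫ = ∫ t in a..b, ⟪w t, v t⟫ := rfl

theorem integral_norm_le (w : PolyL2 S n a b) : ∫ t in a..b, ‖w t‖ ≤ √(b - a) * ‖w‖ := by
  have hsq : ∫ t in a..b, ‖w t‖ ^ 2 = ‖w‖ ^ 2 := by
    simp only [← real_inner_self_eq_norm_sq, inner_def]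
  have h := sq_integral_le_mul_integral_sq hab.out.le w.continuous.norm.continuousOn
  rw [hsq] at h
  calc ∫ t in a..b, ‖w t‖ ≤ √((b - a) * ‖w‖ ^ 2) := Real.le_sqrt_of_sq_le h
    _ = √(b - a) * ‖w‖ := by
      rw [Real.sqrt_mul (sub_nonneg.mpr hab.out.le), Real.sqrt_sq (norm_nonneg w)]

theorem norm_integral_le (w : PolyL2 S n a b) {t : ℝ} (ht : t ∈ Icc a b) :
    ‖∫ τ in a..t, w τ‖ ≤ √(b - a) * ‖w‖ :=
  calc ‖∫ τ in a..t, w τ‖ ≤ ∫ τ in a..t, ‖w τ‖ :=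
        intervalIntegral.norm_integral_le_integral_norm ht.1
    _ ≤ ∫ τ in a..b, ‖w τ‖ := intervalIntegral.integral_mono_interval le_rfl ht.1 ht.2
        (Filter.Eventually.of_forall fun _ => norm_nonneg _)
        (w.continuous.norm.intervalIntegrable a b)
    _ ≤ √(b - a) * ‖w‖ := integral_norm_le w

theorem norm_primitive_sub_le (p : H) (w : PolyL2 S n a b) {t : ℝ} (ht : t ∈ Icc a b) :
    ‖primitive p w t - p‖ ≤ √(b - a) * ‖w‖ := by
  rw [primitive, add_sub_cancel_left]
  exact w.norm_integral_le ht

theorem dist_primitive_le (p : H) (w v : PolyL2 S n a b) {t : ℝ} (ht : t ∈ Icc a b) :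
    dist (primitive p w t) (primitive p v t) ≤ √(b - a) * dist w v := by
  have h : primitive p w t - primitive p v t = primitive p (w - v) t - p := by
    simp only [primitive, sub_apply, intervalIntegral.integral_sub
      (w.continuous.intervalIntegrable a t) (v.continuous.intervalIntegrable a t)]
    abel
  rw [dist_eq_norm, dist_eq_norm, h]
  exact norm_primitive_sub_le p (w - v) ht

theorem isClosed_setOf_primitive_mem (p : H) {B : Set H} (hB : IsClosed B) :
    IsClosed {w : PolyL2 S n a b | ∀ t ∈ Icc a b, primitive p w t ∈ B} := by
  simp only [ofPred_forall]
  exact isClosed_biInter fun t ht =>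
    hB.preimage (LipschitzWith.of_dist_le' fun w v => dist_primitive_le p w v ht).continuous

section Projection

variable [FiniteDimensional ℝ S] {g g₁ g₂ : ℝ → H}

/-- The `L²(a, b)`-orthogonal projection of `g` onto `PolyL2 S n a b`. -/
noncomputable def proj (g : ℝ → H) (hg : ContinuousOn g (Icc a b)) : PolyL2 S n a b :=
  (InnerProductSpace.toDual ℝ (PolyL2 S n a b)).symm <| LinearMap.toContinuousLinearMap
    { toFun := fun V => ∫ t in a..b, ⟪g t, V t⟫
      map_add' := fun V W => by
        simp only [add_apply, inner_add_right]
        exact intervalIntegral.integral_add (intervalIntegrable_inner hg hab.out.le V)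
          (intervalIntegrable_inner hg hab.out.le W)
      map_smul' := fun r V => by
        simp only [smul_apply, real_inner_smul_right, RingHom.id_apply, smul_eq_mul]
        exact intervalIntegral.integral_const_mul r _ }

theorem inner_proj (hg : ContinuousOn g (Icc a b)) (V : PolyL2 S n a b) :
    ⟪proj g hg, V⟫ = ∫ t in a..b, ⟪g t, V t⟫ := by
  rw [proj, InnerProductSpace.toDual_symm_apply]
  rfl

theorem proj_sub (hg₁ : ContinuousOn g₁ (Icc a b)) (hg₂ : ContinuousOn g₂ (Icc a b)) :
    proj g₁ hg₁ - proj g₂ hg₂ = (proj (g₁ - g₂) (hg₁.sub hg₂) : PolyL2 S n a b) :=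
  ext_inner_right ℝ fun V => by
    rw [inner_sub_left, inner_proj, inner_proj, inner_proj, ← intervalIntegral.integral_sub
      (intervalIntegrable_inner hg₁ hab.out.le V) (intervalIntegrable_inner hg₂ hab.out.le V)]
    simp only [Pi.sub_apply, inner_sub_left]

theorem norm_proj_le (hg : ContinuousOn g (Icc a b)) {M : ℝ} (hM : ∀ t ∈ Icc a b, ‖g t‖ ≤ M) :
    ‖(proj g hg : PolyL2 S n a b)‖ ≤ √(b - a) * M := by
  set P : PolyL2 S n a b := proj g hg
  have hM0 : 0 ≤ M := (norm_nonneg _).trans (hM a ⟨le_rfl, hab.out.le⟩)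
  have key : ‖P‖ ^ 2 ≤ (√(b - a) * M) * ‖P‖ :=
    calc ‖P‖ ^ 2 = ∫ t in a..b, ⟪g t, P t⟫ := by rw [← real_inner_self_eq_norm_sq, inner_proj]
      _ ≤ ∫ t in a..b, M * ‖P t‖ :=
        intervalIntegral.integral_mono_on hab.out.le (intervalIntegrable_inner hg hab.out.le P)
          ((P.continuous.norm.const_mul M).intervalIntegrable _ _) fun t ht =>
            (real_inner_le_norm _ _).trans (mul_le_mul_of_nonneg_right (hM t ht) (norm_nonneg _))
      _ = M * ∫ t in a..b, ‖P t‖ := intervalIntegral.integral_const_mul M _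
      _ ≤ M * (√(b - a) * ‖P‖) := mul_le_mul_of_nonneg_left P.integral_norm_le hM0
      _ = (√(b - a) * M) * ‖P‖ := by ring
  nlinarith [norm_nonneg P, mul_nonneg (Real.sqrt_nonneg (b - a)) hM0]

end Projection

section Galerkin

variable [CompleteSpace H] [FiniteDimensional ℝ S] {p : H} {κ K L : ℝ} {F : ℝ → H → H}

noncomputable def galerkinMap (hF : ContinuousOn (Function.uncurry F) (Icc a b ×ˢ univ))
    (p : H) (w : PolyL2 S n a b) : PolyL2 S n a b :=
  proj (fun t => F t (primitive p w t)) (continuousOn_comp_primitive hF p w)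

theorem galerkinMap_eq_self_iff (hF : ContinuousOn (Function.uncurry F) (Icc a b ×ˢ univ))
    (p : H) (w : PolyL2 S n a b) : galerkinMap hF p w = w ↔
      ∀ V : PolyL2 S n a b, ⟪w, V⟫ = ∫ t in a..b, ⟪F t (primitive p w t), V t⟫ :=
  ⟨fun h V => (congrArg (⟪·, V⟫) h).symm.trans (inner_proj _ V),
    fun h => ext_inner_right ℝ fun V => (inner_proj _ V).trans (h V).symm⟩

theorem mapsTo_galerkinMap (hF : ContinuousOn (Function.uncurry F) (Icc a b ×ˢ univ))
    (hp : p ∈ S) (hFK : ∀ t ∈ Icc a b, ∀ y ∈ (S : Set H) ∩ Metric.closedBall p κ, ‖F t y‖ ≤ K)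
    (hK : (b - a) * K ≤ κ) :
    MapsTo (galerkinMap hF p)
      {w : PolyL2 S n a b | ∀ t ∈ Icc a b, primitive p w t ∈ (S : Set H) ∩ Metric.closedBall p κ}
      {w | ∀ t ∈ Icc a b, primitive p w t ∈ (S : Set H) ∩ Metric.closedBall p κ} := by
  intro w hw t ht
  refine ⟨(isHmPoly_primitive hp _).mem t, ?_⟩
  rw [Metric.mem_closedBall, dist_eq_norm]
  calc ‖primitive p (galerkinMap hF p w) t - p‖ ≤ √(b - a) * ‖galerkinMap hF p w‖ :=
        norm_primitive_sub_le p _ ht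
    _ ≤ √(b - a) * (√(b - a) * K) := by
        gcongr
        exact norm_proj_le _ fun s hs => hFK s hs _ (hw s hs)
    _ = (b - a) * K := by rw [← mul_assoc, Real.mul_self_sqrt (sub_nonneg.2 hab.out.le)]
    _ ≤ κ := hK

theorem lipschitzOnWith_galerkinMap (hF : ContinuousOn (Function.uncurry F) (Icc a b ×ˢ univ))
    (hL : 0 ≤ L) (hFL : ∀ t ∈ Icc a b, ∀ u ∈ (S : Set H) ∩ Metric.closedBall p κ,
      ∀ v ∈ (S : Set H) ∩ Metric.closedBall p κ, ‖F t u - F t v‖ ≤ L * ‖u - v‖) :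
    LipschitzOnWith (Real.toNNReal ((b - a) * L)) (galerkinMap hF p)
      {w : PolyL2 S n a b | ∀ t ∈ Icc a b, primitive p w t ∈ (S : Set H) ∩ Metric.closedBall p κ} :=
  LipschitzOnWith.of_dist_le' fun w hw v hv => by
    rw [dist_eq_norm, dist_eq_norm, galerkinMap, galerkinMap, proj_sub]
    calc _ ≤ √(b - a) * (L * (√(b - a) * ‖w - v‖)) := norm_proj_le _ fun t ht => by
          refine (hFL t ht _ (hw t ht) _ (hv t ht)).trans (mul_le_mul_of_nonneg_left ?_ hL)
          rw [← dist_eq_norm, ← dist_eq_norm]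
          exact dist_primitive_le p w v ht
      _ = (√(b - a) * √(b - a)) * L * ‖w - v‖ := by ring
      _ = (b - a) * L * ‖w - v‖ := by rw [Real.mul_self_sqrt (sub_nonneg.2 hab.out.le)]

theorem existsUnique_galerkin (hF : ContinuousOn (Function.uncurry F) (Icc a b ×ˢ univ))
    (hp : p ∈ S) (hκ : 0 ≤ κ) (hL : 0 ≤ L)
    (hFK : ∀ t ∈ Icc a b, ∀ y ∈ (S : Set H) ∩ Metric.closedBall p κ, ‖F t y‖ ≤ K)
    (hFL : ∀ t ∈ Icc a b, ∀ u ∈ (S : Set H) ∩ Metric.closedBall p κ,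
      ∀ v ∈ (S : Set H) ∩ Metric.closedBall p κ, ‖F t u - F t v‖ ≤ L * ‖u - v‖)
    (hK : (b - a) * K ≤ κ) (hL1 : (b - a) * L < 1) :
    ∃! w : PolyL2 S n a b,
      (∀ t ∈ Icc a b, primitive p w t ∈ (S : Set H) ∩ Metric.closedBall p κ) ∧
        ∀ V : PolyL2 S n a b, ⟪w, V⟫ = ∫ t in a..b, ⟪F t (primitive p w t), V t⟫ := by
  simp only [← galerkinMap_eq_self_iff hF]
  exact existsUnique_fixedPoint_of_mapsTo
    (isClosed_setOf_primitive_mem p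
      (S.closed_of_finiteDimensional.inter Metric.isClosed_closedBall))
    ⟨0, fun t _ => by simp [primitive_zero, hp, hκ]⟩ (mapsTo_galerkinMap hF hp hFK hK)
    (Real.toNNReal_lt_one.2 hL1) (lipschitzOnWith_galerkinMap hF hL hFL)

end Galerkin

end InnerProduct

end PolyL2

end

theorem cG_uniqueness_general
    {H : Type*} [NormedAddCommGroup H] [InnerProductSpace ℝ H] [CompleteSpace H]
    (Hm : Submodule ℝ H) [FiniteDimensional ℝ Hm]
    (T : ℝ) (F : ℝ → H → H)
    (hFcont : ContinuousOn (fun p : ℝ × H => F p.1 p.2) (Set.Icc 0 T ×ˢ Set.univ))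
    (a : ℝ) (ha : a ∈ Set.Ico (0 : ℝ) T) (u_prev : H)
    (κ θ : ℝ) (hκ : 0 < κ) (haθ : a + θ ≤ T)
    (B : Set H)
    (hB : B = {y : H | y ∈ Hm ∧ ‖y - (Submodule.orthogonalProjection Hm u_prev : H)‖ ≤ κ})
    (K : ℝ)
    (hK : IsGreatest {s : ℝ | ∃ t ∈ Set.Icc a (a + θ), ∃ y ∈ B, s = ‖F t y‖} K)
    (L_B : ℝ) (hLB0 : 0 ≤ L_B)
    (hLip : ∀ t ∈ Set.Icc a (a + θ), ∀ u ∈ B, ∀ v ∈ B,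
      ‖F t u - F t v‖ ≤ L_B * ‖u - v‖)
    (k : ℝ) (hk0 : 0 < k) (hkθ : k ≤ θ) (hkK : k * K ≤ κ) (hkL : k * L_B < 1)
    (r : ℕ) :
    ∃! U : ℝ → H, IsHmPoly Hm (r + 1) U ∧
      U a = (Submodule.orthogonalProjection Hm u_prev : H) ∧
      (∀ t ∈ Set.Icc a (a + k), U t ∈ B) ∧
      ∀ V : ℝ → H, IsHmPoly Hm r V →
        (∫ t in a..(a + k), ⟪deriv U t, V t⟫) =
          ∫ t in a..(a + k), ⟪F t (U t), V t⟫ := by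
  have : Fact (a < a + k) := ⟨by linarith⟩
  set p : H := (Submodule.orthogonalProjection Hm u_prev : H)
  have hp : p ∈ Hm := Submodule.coe_mem _
  obtain rfl : B = (Hm : Set H) ∩ Metric.closedBall p κ := by
    rw [hB]
    ext y
    simp [dist_eq_norm]
  have hIcc : Icc a (a + k) ⊆ Icc a (a + θ) := Icc_subset_Icc_right (by linarith)
  obtain ⟨w, ⟨hwB, hwV⟩, hw_unique⟩ := PolyL2.existsUnique_galerkin (n := r)
    (hFcont.mono (prod_mono (Icc_subset_Icc ha.1 (by linarith)) subset_rfl)) hp hκ.le hLB0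
    (fun t ht y hy => hK.2 ⟨t, hIcc ht, y, hy, rfl⟩) (fun t ht => hLip t (hIcc ht))
    (by rwa [add_sub_cancel_left]) (by rwa [add_sub_cancel_left])
  refine ⟨PolyL2.primitive p w, ⟨PolyL2.isHmPoly_primitive hp w, PolyL2.primitive_left p w, hwB,
    fun V hV => ?_⟩, ?_⟩
  · rw [PolyL2.deriv_primitive]
    exact hwV (PolyL2.mk V hV)
  · rintro U ⟨hU, hUa, hUB, hUV⟩
    set wU : PolyL2 Hm r a (a + k) := PolyL2.mk (deriv U) hU.deriv
    have hUw : PolyL2.primitive p wU = U := hUa ▸ PolyL2.primitive_mk_deriv hU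
    have hwU : wU = w := hw_unique wU ⟨hUw ▸ hUB, fun V => by
      rw [hUw]
      exact hUV V V.isHmPoly⟩
    rw [← hUw, hwU]

/-- Theorem 4.1 (cG case): under a local Lipschitz assumption, the continuous
Galerkin time step possesses exactly one solution with values in the ball `B`. -/
theorem cG_uniqueness
    {H : Type*} [NormedAddCommGroup H] [InnerProductSpace ℝ H] [CompleteSpace H]
    (Hm : Submodule ℝ H) [FiniteDimensional ℝ Hm]
    (T : ℝ) (F : ℝ → H → H)
    (hFcont : ContinuousOn (fun p : ℝ × H => F p.1 p.2) (Set.Icc 0 T ×ˢ Set.univ))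
    (a : ℝ) (ha : a ∈ Set.Ico (0 : ℝ) T) (u_prev : H)
    (κ θ : ℝ) (hκ : 0 < κ) (hθ : 0 < θ) (haθ : a + θ ≤ T)
    (B : Set H)
    (hB : B = {y : H | y ∈ Hm ∧ ‖y - (Submodule.orthogonalProjection Hm u_prev : H)‖ ≤ κ})
    (K : ℝ)
    (hK : IsGreatest {s : ℝ | ∃ t ∈ Set.Icc a (a + θ), ∃ y ∈ B, s = ‖F t y‖} K)
    (L_B : ℝ) (hLB0 : 0 ≤ L_B)
    (hLip : ∀ t ∈ Set.Icc a (a + θ), ∀ u ∈ B, ∀ v ∈ B,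
      ‖F t u - F t v‖ ≤ L_B * ‖u - v‖)
    (k : ℝ) (hk0 : 0 < k) (hkθ : k ≤ θ) (hkK : k * K ≤ κ) (hkL : k * L_B < 1)
    (r : ℕ) :
    ∃! U : ℝ → H, IsHmPoly Hm (r + 1) U ∧
      U a = (Submodule.orthogonalProjection Hm u_prev : H) ∧
      (∀ t ∈ Set.Icc a (a + k), U t ∈ B) ∧
      ∀ V : ℝ → H, IsHmPoly Hm r V →
        (∫ t in a..(a + k), ⟪deriv U t, V t⟫) =
          ∫ t in a..(a + k), ⟪F t (U t), V t⟫ :=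
  cG_uniqueness_general Hm T F hFcont a ha u_prev κ θ hκ haθ B hB K hK L_B hLB0 hLip k hk0 hkθ hkK
    hkL r
end

section
/- Let H be a real Hilbert space, T > 0, and let u : [0,T] → H be differentiable with u'(t) = F(t, u(t)) for all t ∈ [0,T], where F : [0,T] × H → H. Suppose there are constants δ > 0, β > 1, and c_F ≥ 0 such that ⟨F(t,x), x⟩ ≥ δ ‖x‖^{1+β} for all t ∈ [0,T] and all x ∈ H with ‖x‖ ≥ c_F, and suppose ‖u(0)‖ > c_F. Then T ≤ ‖u(0)‖^{1−β} / ((β−1)·δ). -/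
open Set
open scoped RealInnerProductSpace

/-!
The function `ψ = ‖u‖^{1-β}` is positive and, by the growth condition, decreases at rate at
least `(β-1)δ`, so it would turn negative after time `‖u₀‖^{1-β}/((β-1)δ)`. The growth
condition is available only while `‖u‖ ≥ c_F`; this persists because `‖u‖²` has positive
derivative `2⟪u', u⟫` whenever `‖u‖ = ‖u₀‖ > c_F`.
-/

section

variable {H : Type*} [NormedAddCommGroup H] [InnerProductSpace ℝ H]

theorem HasDerivWithinAt.norm_rpow {u : ℝ → H} {u' : H} {s : Set ℝ} {t : ℝ} (r : ℝ)
    (hu : HasDerivWithinAt u u' s t) (h0 : u t ≠ 0) :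
    HasDerivWithinAt (fun τ => ‖u τ‖ ^ r) (r * ‖u t‖ ^ (r - 2) * ⟪u', u t⟫) s t := by
  have norm_rpow_eq (x : H) (p : ℝ) : ‖x‖ ^ p = (‖x‖ ^ 2) ^ (p / 2) := by
    rw [← Real.rpow_natCast_mul (norm_nonneg x)]
    congr 1
    push_cast
    ring
  simp only [norm_rpow_eq _ r, norm_rpow_eq _ (r - 2)]
  convert hu.norm_sq.rpow_const (p := r / 2) (Or.inl (by positivity)) using 1
  rw [real_inner_comm]
  ring_nf

variable {u u' : ℝ → H} {a b : ℝ}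

theorem norm_le_norm_of_inner_deriv_pos (hu : ContinuousOn u (Icc a b))
    (hu' : ∀ t ∈ Ico a b, HasDerivWithinAt u (u' t) (Ici t) t)
    (hpos : ∀ t ∈ Ico a b, ‖u t‖ = ‖u a‖ → 0 < ⟪u' t, u t⟫) :
    ∀ t ∈ Icc a b, ‖u a‖ ≤ ‖u t‖ := by
  have hsq : ∀ t ∈ Icc a b, -‖u t‖ ^ 2 ≤ -‖u a‖ ^ 2 :=
    image_le_of_deriv_right_lt_deriv_boundary (f' := fun t => -(2 * ⟪u t, u' t⟫))
      (B' := 0) (hu.norm.pow 2).neg (fun t ht => (hu' t ht).norm_sq.neg) le_rfl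
      (fun _ => hasDerivAt_const _ _) fun t ht heq => by
        have hinner := hpos t ht (by simpa using heq)
        rw [real_inner_comm] at hinner
        simp only [Pi.zero_apply]
        linarith
  intro t ht
  exact pow_le_pow_iff_left₀ (norm_nonneg _) (norm_nonneg _) two_ne_zero |>.mp
    (neg_le_neg_iff.mp (hsq t ht))

theorem norm_rpow_le_of_growth {δ β : ℝ} (hβ : 1 ≤ β) (hu : ContinuousOn u (Icc a b))
    (hu' : ∀ t ∈ Ico a b, HasDerivWithinAt u (u' t) (Ici t) t)
    (hne : ∀ t ∈ Icc a b, u t ≠ 0)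
    (hgrowth : ∀ t ∈ Ico a b, δ * ‖u t‖ ^ (1 + β) ≤ ⟪u' t, u t⟫) :
    ∀ t ∈ Icc a b, ‖u t‖ ^ (1 - β) ≤ ‖u a‖ ^ (1 - β) - (β - 1) * δ * (t - a) := by
  have hcont : ContinuousOn (fun t => ‖u t‖ ^ (1 - β)) (Icc a b) :=
    hu.norm.rpow_const fun t ht => Or.inl (norm_ne_zero_iff.mpr (hne t ht))
  refine image_le_of_deriv_right_le_deriv_boundary (B' := fun _ => -((β - 1) * δ)) hcont
    (fun t ht => (hu' t ht).norm_rpow (1 - β) (hne t (Ico_subset_Icc_self ht)))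
    (by simp) (by fun_prop) (fun t _ => ?_) fun t ht => ?_
  · simpa using ((hasDerivAt_id t).sub_const a |>.const_mul ((β - 1) * δ)
      |>.const_sub (‖u a‖ ^ (1 - β))).hasDerivWithinAt
  · have hnorm : 0 < ‖u t‖ := norm_pos_iff.mpr (hne t (Ico_subset_Icc_self ht))
    have hcancel : ‖u t‖ ^ (1 - β - 2) * ‖u t‖ ^ (1 + β) = 1 := by
      rw [← Real.rpow_add hnorm, show 1 - β - 2 + (1 + β) = 0 by ring, Real.rpow_zero]
    calc (1 - β) * ‖u t‖ ^ (1 - β - 2) * ⟪u' t, u t⟫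
        ≤ (1 - β) * ‖u t‖ ^ (1 - β - 2) * (δ * ‖u t‖ ^ (1 + β)) :=
          mul_le_mul_of_nonpos_left (hgrowth t ht)
            (mul_nonpos_of_nonpos_of_nonneg (by linarith) (by positivity))
      _ = (1 - β) * δ * (‖u t‖ ^ (1 - β - 2) * ‖u t‖ ^ (1 + β)) := by ring
      _ = -((β - 1) * δ) := by rw [hcancel]; ring

end

theorem blow_up_time_upper_bound_general
    {H : Type*} [NormedAddCommGroup H] [InnerProductSpace ℝ H]
    (T : ℝ) (hT : 0 < T) (F : ℝ → H → H) (u : ℝ → H)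
    (hu : ∀ t ∈ Set.Icc (0 : ℝ) T,
      HasDerivWithinAt u (F t (u t)) (Set.Icc (0 : ℝ) T) t)
    (δ β c_F : ℝ) (hδ : 0 < δ) (hβ : 1 < β) (hcF : 0 ≤ c_F)
    (hgrowth : ∀ t ∈ Set.Icc (0 : ℝ) T, ∀ x : H, c_F ≤ ‖x‖ →
      δ * ‖x‖ ^ (1 + β) ≤ ⟪F t x, x⟫)
    (hu0 : c_F < ‖u 0‖) :
    T ≤ ‖u 0‖ ^ (1 - β) / ((β - 1) * δ) := by
  have hu_cont : ContinuousOn u (Icc 0 T) := fun t ht => (hu t ht).continuousWithinAt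
  have hu_right : ∀ t ∈ Ico 0 T, HasDerivWithinAt u (F t (u t)) (Ici t) t := fun t ht =>
    (hu t (Ico_subset_Icc_self ht)).mono_of_mem_nhdsWithin (Icc_mem_nhdsGE_of_mem ht)
  have hnorm : ∀ t ∈ Icc 0 T, ‖u 0‖ ≤ ‖u t‖ :=
    norm_le_norm_of_inner_deriv_pos hu_cont hu_right fun t ht heq => by
      have hut : 0 < ‖u t‖ := heq ▸ hcF.trans_lt hu0
      exact (mul_pos hδ (Real.rpow_pos_of_pos hut _)).trans_le
        (hgrowth t (Ico_subset_Icc_self ht) (u t) (heq ▸ hu0.le))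
  have hlarge : ∀ t ∈ Icc 0 T, c_F < ‖u t‖ := fun t ht => hu0.trans_le (hnorm t ht)
  have hdecay := norm_rpow_le_of_growth hβ.le hu_cont hu_right
    (fun t ht => norm_pos_iff.mp (hcF.trans_lt (hlarge t ht)))
    (fun t ht => hgrowth t (Ico_subset_Icc_self ht) (u t) (hlarge t (Ico_subset_Icc_self ht)).le)
    T ⟨hT.le, le_rfl⟩
  have hψ_nonneg := Real.rpow_nonneg (norm_nonneg (u T)) (1 - β)
  rw [le_div_iff₀ (mul_pos (sub_pos.mpr hβ) hδ)]
  linarith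

/-- The upper bound `T̄_∞ = ‖u₀‖^{1−β}/((β−1)δ)` on the blow-up time of the
initial value problem `u' = F(t,u)` under the algebraic growth condition
`⟪F(t,u), u⟫ ≥ δ‖u‖^{1+β}` for `‖u‖ ≥ c_F`. -/
theorem blow_up_time_upper_bound
    {H : Type*} [NormedAddCommGroup H] [InnerProductSpace ℝ H] [CompleteSpace H]
    (T : ℝ) (hT : 0 < T) (F : ℝ → H → H) (u : ℝ → H)
    (hu : ∀ t ∈ Set.Icc (0 : ℝ) T,
      HasDerivWithinAt u (F t (u t)) (Set.Icc (0 : ℝ) T) t)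
    (δ β c_F : ℝ) (hδ : 0 < δ) (hβ : 1 < β) (hcF : 0 ≤ c_F)
    (hgrowth : ∀ t ∈ Set.Icc (0 : ℝ) T, ∀ x : H, c_F ≤ ‖x‖ →
      δ * ‖x‖ ^ (1 + β) ≤ ⟪F t x, x⟫)
    (hu0 : c_F < ‖u 0‖) :
    T ≤ ‖u 0‖ ^ (1 - β) / ((β - 1) * δ) :=
  blow_up_time_upper_bound_general T hT F u hu δ β c_F hδ hβ hcF hgrowth hu0
end

section
/- Let H be a real Hilbert space, T > 0, and let u : [0,T] → H be differentiable with u'(t) = F(t, u(t)) for all t ∈ [0,T], where F : [0,T] × H → H. Suppose there are constants δ > 0, β > 1, and c_F ≥ 0 such that ⟨F(t,x), x⟩ ≥ δ ‖x‖^{1+β} for all t ∈ [0,T] and all x ∈ H with ‖x‖ ≥ c_F, and suppose ‖u(0)‖ > c_F. Then the function t ↦ ‖u(t)‖ is nondecreasing on [0,T]; in particular ‖u(t)‖ ≥ ‖u(0)‖ > c_F for all t ∈ [0,T]. -/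
/-!
`(d/dt)‖u‖² = 2⟪u', u⟫ = 2⟪F(t,u), u⟫ ≥ 2δ‖u‖^{1+β} ≥ 0` wherever `‖u‖ ≥ c_F`, so `‖u‖` cannot
decrease while it stays above `c_F`. If it ever came down to `c_F`, then at the first such time
`m` it would be nondecreasing on `[0, m]`, giving `c_F < ‖u 0‖ ≤ ‖u m‖ ≤ c_F`. Hence `‖u‖ > c_F`
throughout and the norm is nondecreasing on all of `[0, T]`.
-/

open Set
open scoped RealInnerProductSpace

section NormMonotone

variable {E : Type*} [NormedAddCommGroup E] [InnerProductSpace ℝ E]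
  {u u' : ℝ → E} {a b c : ℝ}

theorem monotoneOn_norm_of_inner_deriv_nonneg (hcont : ContinuousOn u (Icc a b))
    (hderiv : ∀ t ∈ Ioo a b, HasDerivAt u (u' t) t)
    (hnonneg : ∀ t ∈ Ioo a b, 0 ≤ ⟪u' t, u t⟫) :
    MonotoneOn (fun t => ‖u t‖) (Icc a b) := by
  have hsq : MonotoneOn (fun t => ‖u t‖ ^ 2) (Icc a b) := by
    refine monotoneOn_of_hasDerivWithinAt_nonneg (f' := fun t => 2 * ⟪u t, u' t⟫)
      (convex_Icc a b) (hcont.norm.pow 2) (fun t ht => ?_) (fun t ht => ?_)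
    · rw [interior_Icc] at ht ⊢
      exact (hderiv t ht).norm_sq.hasDerivWithinAt
    · rw [interior_Icc] at ht
      exact mul_nonneg zero_le_two (real_inner_comm (u t) (u' t) ▸ hnonneg t ht)
  intro s hs t ht hst
  exact (pow_le_pow_iff_left₀ (norm_nonneg _) (norm_nonneg _) two_ne_zero).1 (hsq hs ht hst)

theorem lt_norm_of_inner_deriv_nonneg_of_le (hcont : ContinuousOn u (Icc a b))
    (hderiv : ∀ t ∈ Ioo a b, HasDerivAt u (u' t) t)
    (hnonneg : ∀ t ∈ Ioo a b, c ≤ ‖u t‖ → 0 ≤ ⟪u' t, u t⟫) (ha : c < ‖u a‖) :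
    ∀ t ∈ Icc a b, c < ‖u t‖ := by
  by_contra! hdown
  set S := Icc a b ∩ (fun t => ‖u t‖) ⁻¹' Iic c
  have hS : IsCompact S :=
    isCompact_Icc.of_isClosed_subset
      (hcont.norm.preimage_isClosed_of_isClosed isClosed_Icc isClosed_Iic) inter_subset_left
  obtain ⟨m, ⟨hm, hmc⟩, hfirst⟩ := hS.exists_isLeast hdown
  have hsub : Icc a m ⊆ Icc a b := Icc_subset_Icc_right hm.2
  have habove : ∀ t ∈ Ioo a m, c < ‖u t‖ := fun t ht => by
    by_contra! htc
    exact ht.2.not_ge (hfirst ⟨hsub (Ioo_subset_Icc_self ht), htc⟩)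
  have hmono : MonotoneOn (fun t => ‖u t‖) (Icc a m) :=
    monotoneOn_norm_of_inner_deriv_nonneg (hcont.mono hsub)
      (fun t ht => hderiv t (Ioo_subset_Ioo_right hm.2 ht))
      (fun t ht => hnonneg t (Ioo_subset_Ioo_right hm.2 ht) (habove t ht).le)
  have : ‖u a‖ ≤ ‖u m‖ := hmono (left_mem_Icc.2 hm.1) (right_mem_Icc.2 hm.1) hm.1
  exact (ha.trans_le this).not_ge hmc

theorem monotoneOn_norm_of_inner_deriv_nonneg_of_le (hcont : ContinuousOn u (Icc a b))
    (hderiv : ∀ t ∈ Ioo a b, HasDerivAt u (u' t) t)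
    (hnonneg : ∀ t ∈ Ioo a b, c ≤ ‖u t‖ → 0 ≤ ⟪u' t, u t⟫) (ha : c < ‖u a‖) :
    MonotoneOn (fun t => ‖u t‖) (Icc a b) :=
  monotoneOn_norm_of_inner_deriv_nonneg hcont hderiv fun t ht =>
    hnonneg t ht
      (lt_norm_of_inner_deriv_nonneg_of_le hcont hderiv hnonneg ha t (Ioo_subset_Icc_self ht)).le

end NormMonotone

theorem solution_norm_monotone_general
    {H : Type*} [NormedAddCommGroup H] [InnerProductSpace ℝ H]
    (T : ℝ) (F : ℝ → H → H) (u : ℝ → H)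
    (hu : ∀ t ∈ Set.Icc (0 : ℝ) T,
      HasDerivWithinAt u (F t (u t)) (Set.Icc (0 : ℝ) T) t)
    (δ β c_F : ℝ) (hδ : 0 < δ)
    (hgrowth : ∀ t ∈ Set.Icc (0 : ℝ) T, ∀ x : H, c_F ≤ ‖x‖ →
      δ * ‖x‖ ^ (1 + β) ≤ ⟪F t x, x⟫)
    (hu0 : c_F < ‖u 0‖) :
    MonotoneOn (fun t => ‖u t‖) (Set.Icc (0 : ℝ) T) ∧
      ∀ t ∈ Set.Icc (0 : ℝ) T, ‖u 0‖ ≤ ‖u t‖ ∧ c_F < ‖u t‖ := by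
  have hcont : ContinuousOn u (Icc 0 T) := fun t ht => (hu t ht).continuousWithinAt
  have hderiv : ∀ t ∈ Ioo 0 T, HasDerivAt u (F t (u t)) t := fun t ht =>
    (hu t (Ioo_subset_Icc_self ht)).hasDerivAt (Icc_mem_nhds ht.1 ht.2)
  have hnonneg : ∀ t ∈ Ioo 0 T, c_F ≤ ‖u t‖ → 0 ≤ ⟪F t (u t), u t⟫ := fun t ht hc =>
    (by positivity : 0 ≤ δ * ‖u t‖ ^ (1 + β)).trans
      (hgrowth t (Ioo_subset_Icc_self ht) (u t) hc)
  have hmono := monotoneOn_norm_of_inner_deriv_nonneg_of_le hcont hderiv hnonneg hu0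
  exact ⟨hmono, fun t ht =>
    ⟨hmono (left_mem_Icc.2 (ht.1.trans ht.2)) ht ht.1,
      lt_norm_of_inner_deriv_nonneg_of_le hcont hderiv hnonneg hu0 t ht⟩⟩

/-- Section 5.1: monotonicity of the solution norm for `u' = F(t,u)` under the
algebraic growth condition `⟪F(t,u), u⟫ ≥ δ‖u‖^{1+β}` for `‖u‖ ≥ c_F`. -/
theorem solution_norm_monotone
    {H : Type*} [NormedAddCommGroup H] [InnerProductSpace ℝ H] [CompleteSpace H]
    (T : ℝ) (hT : 0 < T) (F : ℝ → H → H) (u : ℝ → H)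
    (hu : ∀ t ∈ Set.Icc (0 : ℝ) T,
      HasDerivWithinAt u (F t (u t)) (Set.Icc (0 : ℝ) T) t)
    (δ β c_F : ℝ) (hδ : 0 < δ) (hβ : 1 < β) (hcF : 0 ≤ c_F)
    (hgrowth : ∀ t ∈ Set.Icc (0 : ℝ) T, ∀ x : H, c_F ≤ ‖x‖ →
      δ * ‖x‖ ^ (1 + β) ≤ ⟪F t x, x⟫)
    (hu0 : c_F < ‖u 0‖) :
    MonotoneOn (fun t => ‖u t‖) (Set.Icc (0 : ℝ) T) ∧
      ∀ t ∈ Set.Icc (0 : ℝ) T, ‖u 0‖ ≤ ‖u t‖ ∧ c_F < ‖u t‖ :=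
  solution_norm_monotone_general T F u hu δ β c_F hδ hgrowth hu0
end

section
/- Let H be a finite-dimensional real Hilbert space and r ∈ ℕ. Let α, δ, γ > 0, β > 1, c_F ≥ 0, and let F : ℝ × H → H be continuous and satisfy, for all t ≥ 0: ‖F(t,x)‖ ≤ α‖x‖^β and ⟨F(t,x), x⟩ ≥ δ‖x‖^{1+β} whenever ‖x‖ ≥ c_F, and ‖F(t,x) − F(t,y)‖ ≤ γ·max(‖x‖,‖y‖)^{β−1}·‖x − y‖ whenever ‖x‖ ≥ c_F and ‖y‖ ≥ c_F. Fix w ∈ H with ‖w‖ > c_F, fix ρ with 0 < ρ < γ/α, set η = ρα/(γ − ρα), and assume η ≤ 1 − c_F/‖w‖. Let a ≥ 0, k = (1/(2γ^β))·ρ·(γ − ρα)^{β−1}·‖w‖^{1−β}, and κ = η‖w‖. Suppose U is an H-valued polynomial of degree at most r such that ‖U(t) − w‖ ≤ κ for all t ∈ [a, a+k] and ∫_a^{a+k} ⟨U'(t), V(t)⟩ dt + ⟨U(a) − w, V(a)⟩ = ∫_a^{a+k} ⟨F(t, U(t)), V(t)⟩ dt for every H-valued polynomial V of degree at most r. Then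 ‖U(a+k)‖ ≥ (1 + (1/(2γ^β))·ρ·Ψ(ρ))·‖w‖, where Ψ(ρ) = (δ·(γ − ρα)^β − ρ·α·γ^β)/(γ − ρα). -/
open MeasureTheory Set
open scoped RealInnerProductSpace

/-!
Testing the dG equation with the constant `V ≡ w` gives, by the fundamental theorem of calculus,
`⟪U(a+k), w⟫ = ‖w‖² + ∫_a^{a+k} ⟪F(t, U t), w⟫ dt`. On the step, `U t` stays within `η‖w‖` of `w`,
so coercivity at `w` and the local Lipschitz bound give `⟪F(t, U t), w⟫ ≥ m` with
`m = δ‖w‖^{1+β} - γ((1+η)‖w‖)^{β-1} η‖w‖²`, and for the chosen `k` the product `k m` equals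
`(2γ^β)⁻¹ ρ Ψ(ρ) ‖w‖²`. Cauchy–Schwarz against `w` turns the lower bound on `⟪U(a+k), w⟫`
into the claimed lower bound on `‖U(a+k)‖`.
-/

namespace IsXPoly

variable {X : Type*} [NormedAddCommGroup X] [NormedSpace ℝ X] {r : ℕ}

theorem const (r : ℕ) (x : X) : IsXPoly r fun _ => x := by
  refine ⟨fun i => if i = 0 then x else 0, fun t => ?_⟩
  rw [Finset.sum_eq_single 0 (fun i _ hi => by simp [hi]) (by simp)]
  simp

theorem contDiff_s12 {U : ℝ → X} (hU : IsXPoly r U) : ContDiff ℝ 1 U := by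
  obtain ⟨c, hc⟩ := hU
  rw [funext hc]
  fun_prop

end IsXPoly

section NormedAddCommGroup

variable {E : Type*} [NormedAddCommGroup E]

theorem norm_le_of_norm_sub_le_mul {x w : E} {η : ℝ} (h : ‖x - w‖ ≤ η * ‖w‖) :
    ‖x‖ ≤ (1 + η) * ‖w‖ := by
  linarith [norm_le_norm_add_norm_sub' x w]

theorem le_norm_of_norm_sub_le_mul {x w : E} {η : ℝ} (h : ‖x - w‖ ≤ η * ‖w‖) :
    (1 - η) * ‖w‖ ≤ ‖x‖ := by
  linarith [norm_sub_norm_le w x, norm_sub_rev x w]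

end NormedAddCommGroup

section InnerProductSpace

variable {H : Type*} [NormedAddCommGroup H] [InnerProductSpace ℝ H]

theorem integral_inner_deriv_eq_sub {U : ℝ → H} (hU : ContDiff ℝ 1 U) (w : H) (a b : ℝ) :
    ∫ t in a..b, ⟪deriv U t, w⟫ = ⟪U b, w⟫ - ⟪U a, w⟫ := by
  have hU' : Continuous (deriv U) := hU.continuous_deriv le_rfl
  refine intervalIntegral.integral_eq_sub_of_hasDerivAt (f := fun t => ⟪U t, w⟫) (fun t _ => ?_)
    ((hU'.inner (𝕜 := ℝ) continuous_const).intervalIntegrable a b)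
  simpa using ((hU.differentiable one_ne_zero t).hasDerivAt.inner ℝ (hasDerivAt_const t w))

theorem inner_apply_ge_of_norm_sub_le_mul {f : H → H} {x w : H} {δ γ β η : ℝ}
    (hγ : 0 ≤ γ) (hβ : 1 ≤ β) (hη : 0 ≤ η)
    (hcoerc : δ * ‖w‖ ^ (1 + β) ≤ ⟪f w, w⟫)
    (hLip : ‖f x - f w‖ ≤ γ * max ‖x‖ ‖w‖ ^ (β - 1) * ‖x - w‖)
    (hxw : ‖x - w‖ ≤ η * ‖w‖) :
    δ * ‖w‖ ^ (1 + β) - γ * ((1 + η) * ‖w‖) ^ (β - 1) * (η * ‖w‖) * ‖w‖ ≤ ⟪f x, w⟫ := by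
  have hmax : max ‖x‖ ‖w‖ ≤ (1 + η) * ‖w‖ :=
    max_le (norm_le_of_norm_sub_le_mul hxw) (by nlinarith [norm_nonneg w])
  have hdiff : ‖f x - f w‖ ≤ γ * ((1 + η) * ‖w‖) ^ (β - 1) * (η * ‖w‖) := by
    refine hLip.trans (mul_le_mul (mul_le_mul_of_nonneg_left ?_ hγ) hxw
      (norm_nonneg _) (by positivity))
    exact Real.rpow_le_rpow (le_max_of_le_right (norm_nonneg _)) hmax (by linarith)
  have hCS : -(‖f x - f w‖ * ‖w‖) ≤ ⟪f x - f w, w⟫ :=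
    neg_le_of_abs_le (abs_real_inner_le_norm _ _)
  rw [inner_sub_left] at hCS
  nlinarith [norm_nonneg w]

theorem le_norm_of_mul_norm_sq_le_inner {u w : H} {C : ℝ} (hw : 0 < ‖w‖)
    (h : C * ‖w‖ ^ 2 ≤ ⟪u, w⟫) : C * ‖w‖ ≤ ‖u‖ := by
  refine le_of_mul_le_mul_right ?_ hw
  calc C * ‖w‖ * ‖w‖ = C * ‖w‖ ^ 2 := by ring
    _ ≤ ‖u‖ * ‖w‖ := h.trans (real_inner_le_norm u w)

end InnerProductSpace

theorem timeStep_mul_margin_eq {c α δ γ β ρ W : ℝ} (hγ : 0 < γ) (hs : 0 < γ - ρ * α)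
    (hW : 0 < W) :
    c * ρ * (γ - ρ * α) ^ (β - 1) * W ^ (1 - β) *
        (δ * W ^ (1 + β) - γ * ((1 + ρ * α / (γ - ρ * α)) * W) ^ (β - 1) *
          (ρ * α / (γ - ρ * α) * W) * W) =
      c * ρ * ((δ * (γ - ρ * α) ^ β - ρ * α * γ ^ β) / (γ - ρ * α)) * W ^ 2 := by
  have h1η : 1 + ρ * α / (γ - ρ * α) = γ / (γ - ρ * α) := by field_simp; ring
  have hpow_sub_one {x : ℝ} (hx : 0 < x) : x ^ (β - 1) = x ^ β / x := by
    rw [Real.rpow_sub_one hx.ne']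
  have hW_one_sub : W ^ (1 - β) = (W ^ (β - 1))⁻¹ := by
    rw [← Real.rpow_neg hW.le, neg_sub]
  have hW_one_add : W ^ (1 + β) = W ^ 2 * W ^ (β - 1) := by
    rw [← Real.rpow_two, ← Real.rpow_add hW]; ring_nf
  rw [h1η, Real.mul_rpow (by positivity) hW.le, Real.div_rpow hγ.le hs.le, hW_one_sub,
    hW_one_add, hpow_sub_one hγ, hpow_sub_one hs]
  field_simp

theorem dG_one_step_lower_growth_general
    {H : Type*} [NormedAddCommGroup H] [InnerProductSpace ℝ H]
    (r : ℕ) (α δ γ β c_F : ℝ)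
    (hα : 0 < α) (hγ : 0 < γ) (hβ : 1 < β) (hcF : 0 ≤ c_F)
    (F : ℝ → H → H) (hFcont : Continuous fun p : ℝ × H => F p.1 p.2)
    (hcoerc : ∀ t : ℝ, 0 ≤ t → ∀ x : H, c_F ≤ ‖x‖ →
      δ * ‖x‖ ^ (1 + β) ≤ ⟪F t x, x⟫)
    (hLip : ∀ t : ℝ, 0 ≤ t → ∀ x y : H, c_F ≤ ‖x‖ → c_F ≤ ‖y‖ →
      ‖F t x - F t y‖ ≤ γ * max ‖x‖ ‖y‖ ^ (β - 1) * ‖x - y‖)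
    (w : H) (hw : c_F < ‖w‖)
    (ρ : ℝ) (hρ0 : 0 < ρ) (hργ : ρ < γ / α)
    (η : ℝ) (hη : η = ρ * α / (γ - ρ * α)) (hη1 : η ≤ 1 - c_F / ‖w‖)
    (a : ℝ) (ha : 0 ≤ a)
    (k : ℝ) (hk : k = 1 / (2 * γ ^ β) * ρ * (γ - ρ * α) ^ (β - 1) * ‖w‖ ^ (1 - β))
    (κ : ℝ) (hκ : κ = η * ‖w‖)
    (U : ℝ → H) (hU : IsXPoly r U)
    (hUB : ∀ t ∈ Set.Icc a (a + k), ‖U t - w‖ ≤ κ)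
    (hweak : ∀ V : ℝ → H, IsXPoly r V →
      (∫ t in a..(a + k), ⟪deriv U t, V t⟫) + ⟪U a - w, V a⟫ =
        ∫ t in a..(a + k), ⟪F t (U t), V t⟫) :
    (1 + 1 / (2 * γ ^ β) * ρ *
        ((δ * (γ - ρ * α) ^ β - ρ * α * γ ^ β) / (γ - ρ * α))) * ‖w‖
      ≤ ‖U (a + k)‖ := by
  have hW : 0 < ‖w‖ := hcF.trans_lt hw
  have hs : 0 < γ - ρ * α := sub_pos.2 ((lt_div_iff₀ hα).mp hργ)
  have hη0 : 0 ≤ η := by rw [hη]; positivity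
  have hk0 : 0 ≤ k := by rw [hk]; positivity
  have hUc := hU.contDiff_s12
  have htested : ⟪U (a + k), w⟫ = ‖w‖ ^ 2 + ∫ t in a..(a + k), ⟪F t (U t), w⟫ := by
    have h := hweak _ (IsXPoly.const r w)
    rw [integral_inner_deriv_eq_sub hUc, inner_sub_left, real_inner_self_eq_norm_sq] at h
    linarith
  rw [le_sub_comm, div_le_iff₀ hW] at hη1
  set m := δ * ‖w‖ ^ (1 + β) - γ * ((1 + η) * ‖w‖) ^ (β - 1) * (η * ‖w‖) * ‖w‖
  have hpointwise : ∀ t ∈ Icc a (a + k), m ≤ ⟪F t (U t), w⟫ := by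
    intro t ht
    have ht0 : 0 ≤ t := ha.trans ht.1
    have hclose : ‖U t - w‖ ≤ η * ‖w‖ := hκ ▸ hUB t ht
    have hcF_le : c_F ≤ ‖U t‖ := hη1.trans (le_norm_of_norm_sub_le_mul hclose)
    exact inner_apply_ge_of_norm_sub_le_mul hγ.le hβ.le hη0 (hcoerc t ht0 w hw.le)
      (hLip t ht0 _ _ hcF_le hw.le) hclose
  have hintegral : k * m ≤ ∫ t in a..(a + k), ⟪F t (U t), w⟫ := by
    have hcont : Continuous fun t => ⟪F t (U t), w⟫ :=
      (hFcont.comp (continuous_id.prodMk hUc.continuous)).inner continuous_const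
    simpa [mul_comm] using intervalIntegral.integral_mono_on (by linarith)
      (intervalIntegrable_const (μ := volume)) (hcont.intervalIntegrable _ _) hpointwise
  have hkm : k * m = 1 / (2 * γ ^ β) * ρ *
      ((δ * (γ - ρ * α) ^ β - ρ * α * γ ^ β) / (γ - ρ * α)) * ‖w‖ ^ 2 := by
    rw [hk]; subst hη; exact timeStep_mul_margin_eq hγ hs hW
  refine le_norm_of_mul_norm_sq_le_inner hW ?_
  linarith

/-- One-step lower growth estimate (equation (geo)) from the proof of
Proposition 5.1 for the dG scheme with the adaptive time step
`k = (2γ^β)⁻¹ ρ (γ−ρα)^{β−1} ‖w‖^{1−β}`. -/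
theorem dG_one_step_lower_growth
    {H : Type*} [NormedAddCommGroup H] [InnerProductSpace ℝ H]
    [FiniteDimensional ℝ H]
    (r : ℕ) (α δ γ β c_F : ℝ)
    (hα : 0 < α) (hδ : 0 < δ) (hγ : 0 < γ) (hβ : 1 < β) (hcF : 0 ≤ c_F)
    (F : ℝ → H → H) (hFcont : Continuous fun p : ℝ × H => F p.1 p.2)
    (hgrowth : ∀ t : ℝ, 0 ≤ t → ∀ x : H, c_F ≤ ‖x‖ → ‖F t x‖ ≤ α * ‖x‖ ^ β)
    (hcoerc : ∀ t : ℝ, 0 ≤ t → ∀ x : H, c_F ≤ ‖x‖ →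
      δ * ‖x‖ ^ (1 + β) ≤ ⟪F t x, x⟫)
    (hLip : ∀ t : ℝ, 0 ≤ t → ∀ x y : H, c_F ≤ ‖x‖ → c_F ≤ ‖y‖ →
      ‖F t x - F t y‖ ≤ γ * max ‖x‖ ‖y‖ ^ (β - 1) * ‖x - y‖)
    (w : H) (hw : c_F < ‖w‖)
    (ρ : ℝ) (hρ0 : 0 < ρ) (hργ : ρ < γ / α)
    (η : ℝ) (hη : η = ρ * α / (γ - ρ * α)) (hη1 : η ≤ 1 - c_F / ‖w‖)
    (a : ℝ) (ha : 0 ≤ a)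
    (k : ℝ) (hk : k = 1 / (2 * γ ^ β) * ρ * (γ - ρ * α) ^ (β - 1) * ‖w‖ ^ (1 - β))
    (κ : ℝ) (hκ : κ = η * ‖w‖)
    (U : ℝ → H) (hU : IsXPoly r U)
    (hUB : ∀ t ∈ Set.Icc a (a + k), ‖U t - w‖ ≤ κ)
    (hweak : ∀ V : ℝ → H, IsXPoly r V →
      (∫ t in a..(a + k), ⟪deriv U t, V t⟫) + ⟪U a - w, V a⟫ =
        ∫ t in a..(a + k), ⟪F t (U t), V t⟫) :
    (1 + 1 / (2 * γ ^ β) * ρ *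
        ((δ * (γ - ρ * α) ^ β - ρ * α * γ ^ β) / (γ - ρ * α))) * ‖w‖
      ≤ ‖U (a + k)‖ :=
  dG_one_step_lower_growth_general r α δ γ β c_F hα hγ hβ hcF F hFcont hcoerc hLip w hw ρ hρ0 hργ η
    hη hη1 a ha k hk κ hκ U hU hUB hweak
end

section
/- Let H be a real inner product space, let M > 0, and let x, y ∈ H satisfy ‖x‖ ≤ M < ‖y‖. Then ‖x/M − y/‖y‖‖² ≤ ‖x − y‖² / (M·‖y‖); in particular ‖x/M − y/‖y‖‖² ≤ ‖x − y‖² / M². -/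
open scoped RealInnerProductSpace

section InvSmul

variable {H : Type*} [NormedAddCommGroup H] [InnerProductSpace ℝ H]

theorem norm_inv_smul_sub_inv_smul_sq {a b : ℝ} (ha : a ≠ 0) (hb : b ≠ 0) (x y : H) :
    ‖a⁻¹ • x - b⁻¹ • y‖ ^ 2 =
      ‖x - y‖ ^ 2 / (a * b) - (b - a) / (a * b) * (‖y‖ ^ 2 / b - ‖x‖ ^ 2 / a) := by
  rw [norm_sub_sq_real, norm_sub_sq_real, norm_smul, norm_smul, real_inner_smul_left,
    real_inner_smul_right, mul_pow, mul_pow, Real.norm_eq_abs, Real.norm_eq_abs, sq_abs, sq_abs]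
  field_simp
  ring

theorem norm_inv_smul_sub_inv_smul_sq_le {a b : ℝ} (ha : 0 < a) (hab : a ≤ b) {x y : H}
    (hxy : ‖x‖ ^ 2 / a ≤ ‖y‖ ^ 2 / b) :
    ‖a⁻¹ • x - b⁻¹ • y‖ ^ 2 ≤ ‖x - y‖ ^ 2 / (a * b) := by
  have hb : 0 < b := ha.trans_le hab
  rw [norm_inv_smul_sub_inv_smul_sq ha.ne' hb.ne', sub_le_self_iff]
  exact mul_nonneg (div_nonneg (sub_nonneg.2 hab) (by positivity)) (sub_nonneg.2 hxy)

end InvSmul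

/-- The mixed-case inner-product estimate from the proof of Appendix
Lemma A.1 (case `‖x‖ ≤ M < ‖y‖`). -/
theorem mixed_case_projection_estimate
    {H : Type*} [NormedAddCommGroup H] [InnerProductSpace ℝ H]
    (M : ℝ) (hM : 0 < M) (x y : H) (hx : ‖x‖ ≤ M) (hy : M < ‖y‖) :
    ‖M⁻¹ • x - ‖y‖⁻¹ • y‖ ^ 2 ≤ ‖x - y‖ ^ 2 / (M * ‖y‖) ∧
      ‖M⁻¹ • x - ‖y‖⁻¹ • y‖ ^ 2 ≤ ‖x - y‖ ^ 2 / M ^ 2 := by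
  have hy₀ : 0 < ‖y‖ := hM.trans hy
  have hxy : ‖x‖ ^ 2 / M ≤ ‖y‖ ^ 2 / ‖y‖ := by
    rw [sq ‖y‖, mul_self_div_self, div_le_iff₀ hM]
    nlinarith [norm_nonneg x]
  have h := norm_inv_smul_sub_inv_smul_sq_le hM hy.le hxy
  refine ⟨h, h.trans ?_⟩
  rw [sq M]
  exact div_le_div_of_nonneg_left (sq_nonneg _) (mul_pos hM hM) (by gcongr)
end
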